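/- arXiv:math/0009055 — 2 statements merged into one kernel-verified Lean document; each statement's English description precedes it below -/
import Mathlib

section
/- Let $A$ be an $n \times n$ $\xi$-regular matrix over $\widehat{\mathbb{Z}G}_\xi$ and fix $m \geq 0$. Then for every conjugacy class $\gamma$ with $\xi(\gamma) < 0$, $\sum_{i,k=1}^n \mu[A_{ik} \otimes (A^m)_{ki}](\gamma) = \frac{1}{m+1}\varepsilon(\mathrm{trace}\,A^{m+1})(\gamma)$, where $\varepsilon: \widehat{\mathbb{Z}G}_\xi \to \widehat{\mathbb{Z}\Gamma}_\xi$ is the conjugacy-class augmentation. The proof uses the cyclic $\mathbb{Z}_{m+1}$-action on index tuples and the identity $\sum_t \xi(h_{t1}) = \xi(\gamma)$ for $\{h_1\cdots h_{m+1}\}=\gamma$. -/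
noncomputable section
open scoped Classical

/-- Novikov finiteness condition (coefficients in `ℤ`). -/
def NovCond {G : Type*} [Group G] (ξ : G → ℝ) (l : G → ℤ) : Prop :=
  ∀ r : ℝ, {g : G | l g ≠ 0 ∧ r ≤ ξ g}.Finite

/-- Convolution product on the Novikov ring `ẐG_ξ`. -/
def conv {G : Type*} [Group G] (l₁ l₂ : G → ℤ) : G → ℤ :=
  fun g => ∑ᶠ h : G, l₁ h * l₂ (h⁻¹ * g)

/-- The norm on the Novikov ring. -/
def novNorm {G : Type*} [Group G] (ξ : G → ℝ) (l : G → ℤ) : ℝ :=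
  sInf {t : ℝ | 0 < t ∧ ∀ g : G, l g ≠ 0 → ξ g ≤ Real.log t}

/-- The multiplicative unit `1 ∈ ẐG_ξ`. -/
def oneF {G : Type*} [Group G] : G → ℤ := fun g => if g = 1 then 1 else 0

/-- Matrix multiplication over the Novikov ring. -/
def matMulC {G : Type*} [Group G] {n : ℕ}
    (A B : Fin n → Fin n → (G → ℤ)) : Fin n → Fin n → (G → ℤ) :=
  fun i j => ∑ l : Fin n, conv (A i l) (B l j)

/-- The identity matrix over the Novikov ring. -/
def matId {G : Type*} [Group G] {n : ℕ} : Fin n → Fin n → (G → ℤ) :=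
  fun i j => if i = j then oneF else 0

/-- Matrix powers `A^m` over the Novikov ring. -/
def matPow {G : Type*} [Group G] {n : ℕ}
    (A : Fin n → Fin n → (G → ℤ)) : ℕ → (Fin n → Fin n → (G → ℤ))
  | 0 => matId
  | m + 1 => matMulC A (matPow A m)

/-- `ξ`-regularity of a matrix. -/
def XiRegular {G : Type*} [Group G] (ξ : G → ℝ) {n : ℕ}
    (A : Fin n → Fin n → (G → ℤ)) : Prop :=
  ∃ K : ℝ, K < 0 ∧ ∀ m : ℕ, ∀ i : Fin (m + 1) → Fin n,
    (∏ j : Fin (m + 1), novNorm ξ (A (i j) (i (j + 1)))) ≤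
      Real.exp (K * (m + 1))

/-- The weighted multiplication-augmentation `μ` at the chain level. -/
def mMap {G : Type*} [Group G] (ξ : G → ℝ) (ξΓ : ConjClasses G → ℝ)
    (l₁ l₂ : G → ℤ) : ConjClasses G → ℝ :=
  fun γ =>
    if ξΓ γ < 0 then
      ∑ᶠ p : G × G, if ConjClasses.mk (p.1 * p.2) = γ then
        (ξ p.1 / ξΓ γ) * ((l₁ p.1 * l₂ p.2 : ℤ) : ℝ) else 0
    else 0

/-- The conjugacy-class augmentation `ε : ẐG_ξ → ẐΓ_ξ`. -/
def epsC {G : Type*} [Group G] (l : G → ℤ) : ConjClasses G → ℤ :=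
  fun γ => ∑ᶠ g : G, if ConjClasses.mk g = γ then l g else 0

namespace MuAux
open Function

variable {G : Type*} [Group G]

lemma bound_above {ξ : G → ℝ} {l : G → ℤ} (hl : NovCond ξ l) :
    ∃ M : ℝ, ∀ g, l g ≠ 0 → ξ g ≤ M := by
  refine ⟨(insert (0:ℝ) ((hl 0).toFinset.image ξ)).max' (Finset.insert_nonempty _ _),
    fun g hg => ?_⟩
  by_cases h0 : (0:ℝ) ≤ ξ g
  · refine Finset.le_max' _ _ (Finset.mem_insert_of_mem (Finset.mem_image.2 ⟨g, ?_, rfl⟩))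
    simp only [Set.Finite.mem_toFinset, Set.mem_setOf_eq]
    exact ⟨hg, h0⟩
  · exact (not_le.1 h0).le.trans (Finset.le_max' _ _ (Finset.mem_insert_self _ _))

lemma pair_finite {ξ : G → ℝ} {x z : G → ℤ} (hx : NovCond ξ x) (hz : NovCond ξ z) (r : ℝ) :
    {p : G × G | x p.1 ≠ 0 ∧ z p.2 ≠ 0 ∧ r ≤ ξ p.1 + ξ p.2}.Finite := by
  obtain ⟨Mx, hMx⟩ := bound_above hx
  obtain ⟨Mz, hMz⟩ := bound_above hz
  apply Set.Finite.subset ((hx (r - Mz)).prod (hz (r - Mx)))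
  rintro ⟨a, b⟩ ⟨ha, hb, hr⟩
  have h1 := hMx a ha
  have h2 := hMz b hb
  exact ⟨⟨ha, by linarith⟩, ⟨hb, by linarith⟩⟩

lemma triple_finite {ξ : G → ℝ} {x y z : G → ℤ}
    (hx : NovCond ξ x) (hy : NovCond ξ y) (hz : NovCond ξ z) (r : ℝ) :
    {q : G × G × G | x q.1 ≠ 0 ∧ y q.2.1 ≠ 0 ∧ z q.2.2 ≠ 0 ∧
      r ≤ ξ q.1 + ξ q.2.1 + ξ q.2.2}.Finite := by
  obtain ⟨Mx, hMx⟩ := bound_above hx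
  obtain ⟨My, hMy⟩ := bound_above hy
  obtain ⟨Mz, hMz⟩ := bound_above hz
  apply Set.Finite.subset ((hx (r - My - Mz)).prod ((hy (r - Mx - Mz)).prod (hz (r - Mx - My))))
  rintro ⟨a, b, c⟩ ⟨ha, hb, hc, hr⟩
  have h1 := hMx a ha
  have h2 := hMy b hb
  have h3 := hMz c hc
  exact ⟨⟨ha, by linarith⟩, ⟨hb, by linarith⟩, ⟨hc, by linarith⟩⟩

lemma xi_inv_mul {ξ : G → ℝ} (hξ : ∀ a b : G, ξ (a * b) = ξ a + ξ b) (h g : G) :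
    ξ h + ξ (h⁻¹ * g) = ξ g := by
  rw [← hξ, mul_inv_cancel_left]

lemma conv_support_finite {ξ : G → ℝ} (hξ : ∀ a b : G, ξ (a * b) = ξ a + ξ b)
    {x z : G → ℤ} (hx : NovCond ξ x) (hz : NovCond ξ z) (g : G) :
    {h : G | x h * z (h⁻¹ * g) ≠ 0}.Finite := by
  apply Set.Finite.subset (Set.Finite.image (fun p : G × G => p.1) (pair_finite hx hz (ξ g)))
  intro h hh
  rcases mul_ne_zero_iff.1 hh with ⟨h1, h2⟩
  exact ⟨(h, h⁻¹ * g), ⟨h1, h2, (xi_inv_mul hξ h g).symm.le⟩, rfl⟩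

lemma conv_zero_right (x : G → ℤ) : conv x (0 : G → ℤ) = 0 := by
  funext g; simp [conv]

lemma conv_zero_left (x : G → ℤ) : conv (0 : G → ℤ) x = 0 := by
  funext g; simp [conv]

lemma conv_oneF_right (x : G → ℤ) : conv x oneF = x := by
  funext g
  show ∑ᶠ h : G, x h * oneF (h⁻¹ * g) = x g
  rw [finsum_eq_single _ g (fun h hh => by
    have : h⁻¹ * g ≠ 1 := fun hc => hh (by
      have := congrArg (h * ·) hc
      simpa [mul_inv_cancel_left] using this.symm)
    simp [oneF, this])]
  simp [oneF]

lemma conv_oneF_left (x : G → ℤ) : conv oneF x = x := by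
  funext g
  show ∑ᶠ h : G, oneF h * x (h⁻¹ * g) = x g
  rw [finsum_eq_single _ 1 (fun h hh => by simp [oneF, hh])]
  simp [oneF]

lemma novCond_zero {ξ : G → ℝ} : NovCond ξ (0 : G → ℤ) := by
  intro r; simp

lemma novCond_oneF {ξ : G → ℝ} : NovCond ξ (oneF : G → ℤ) := by
  intro r
  apply Set.Finite.subset (Set.finite_singleton (1 : G))
  intro g hg
  rcases hg with ⟨h1, -⟩
  by_contra hne
  have hne' : g ≠ 1 := by simpa using hne
  exact h1 (by simp [oneF, hne'])

lemma novCond_add {ξ : G → ℝ} {x y : G → ℤ} (hx : NovCond ξ x) (hy : NovCond ξ y) :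
    NovCond ξ (x + y) := by
  intro r
  apply Set.Finite.subset ((hx r).union (hy r))
  rintro g ⟨hg, hr⟩
  by_cases h1 : x g ≠ 0
  · exact Or.inl ⟨h1, hr⟩
  · push_neg at h1
    refine Or.inr ⟨fun h2 => hg ?_, hr⟩
    simp [Pi.add_apply, h1, h2]

lemma novCond_finsetSum {ξ : G → ℝ} {ι : Type*} (s : Finset ι) (f : ι → G → ℤ)
    (hf : ∀ i ∈ s, NovCond ξ (f i)) : NovCond ξ (∑ i ∈ s, f i) := by
  classical
  induction s using Finset.cons_induction with
  | empty => simpa using (novCond_zero (ξ := ξ))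
  | cons a s ha ih =>
    rw [Finset.sum_cons]
    exact novCond_add (hf a (Finset.mem_cons_self a s))
      (ih fun i hi => hf i (Finset.mem_cons_of_mem hi))

lemma novCond_conv {ξ : G → ℝ} (hξ : ∀ a b : G, ξ (a * b) = ξ a + ξ b)
    {x z : G → ℤ} (hx : NovCond ξ x) (hz : NovCond ξ z) : NovCond ξ (conv x z) := by
  intro r
  apply Set.Finite.subset (Set.Finite.image (fun p : G × G => p.1 * p.2) (pair_finite hx hz r))
  rintro g ⟨hg, hr⟩
  obtain ⟨h, hh⟩ : ∃ h : G, x h * z (h⁻¹ * g) ≠ 0 := by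
    by_contra hc
    push_neg at hc
    exact hg (by simpa [conv] using finsum_congr hc |>.trans finsum_zero)
  rcases mul_ne_zero_iff.1 hh with ⟨h1, h2⟩
  exact ⟨(h, h⁻¹ * g), ⟨h1, h2, by rw [xi_inv_mul hξ]; exact hr⟩, by simp⟩

lemma conv_add_right {ξ : G → ℝ} (hξ : ∀ a b : G, ξ (a * b) = ξ a + ξ b)
    {x z₁ z₂ : G → ℤ} (hx : NovCond ξ x) (hz₁ : NovCond ξ z₁) (hz₂ : NovCond ξ z₂) :
    conv x (z₁ + z₂) = conv x z₁ + conv x z₂ := by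
  funext g
  show ∑ᶠ h : G, x h * (z₁ (h⁻¹ * g) + z₂ (h⁻¹ * g)) = _
  have : ∀ h : G, x h * (z₁ (h⁻¹ * g) + z₂ (h⁻¹ * g))
      = x h * z₁ (h⁻¹ * g) + x h * z₂ (h⁻¹ * g) := fun h => by ring
  rw [finsum_congr this,
    finsum_add_distrib (conv_support_finite hξ hx hz₁ g) (conv_support_finite hξ hx hz₂ g)]
  rfl

lemma conv_add_left {ξ : G → ℝ} (hξ : ∀ a b : G, ξ (a * b) = ξ a + ξ b)
    {x₁ x₂ z : G → ℤ} (hx₁ : NovCond ξ x₁) (hx₂ : NovCond ξ x₂) (hz : NovCond ξ z) :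
    conv (x₁ + x₂) z = conv x₁ z + conv x₂ z := by
  funext g
  show ∑ᶠ h : G, (x₁ h + x₂ h) * z (h⁻¹ * g) = _
  have : ∀ h : G, (x₁ h + x₂ h) * z (h⁻¹ * g)
      = x₁ h * z (h⁻¹ * g) + x₂ h * z (h⁻¹ * g) := fun h => by ring
  rw [finsum_congr this,
    finsum_add_distrib (conv_support_finite hξ hx₁ hz g) (conv_support_finite hξ hx₂ hz g)]
  rfl

lemma conv_finsetSum_right {ξ : G → ℝ} (hξ : ∀ a b : G, ξ (a * b) = ξ a + ξ b)
    {ι : Type*} (s : Finset ι) {x : G → ℤ} (f : ι → G → ℤ)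
    (hx : NovCond ξ x) (hf : ∀ i ∈ s, NovCond ξ (f i)) :
    conv x (∑ i ∈ s, f i) = ∑ i ∈ s, conv x (f i) := by
  classical
  induction s using Finset.cons_induction with
  | empty => simpa using conv_zero_right x
  | cons a s ha ih =>
    rw [Finset.sum_cons, Finset.sum_cons,
      conv_add_right hξ hx (hf a (Finset.mem_cons_self a s))
        (novCond_finsetSum s f fun i hi => hf i (Finset.mem_cons_of_mem hi)),
      ih fun i hi => hf i (Finset.mem_cons_of_mem hi)]

lemma conv_finsetSum_left {ξ : G → ℝ} (hξ : ∀ a b : G, ξ (a * b) = ξ a + ξ b)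
    {ι : Type*} (s : Finset ι) {z : G → ℤ} (f : ι → G → ℤ)
    (hz : NovCond ξ z) (hf : ∀ i ∈ s, NovCond ξ (f i)) :
    conv (∑ i ∈ s, f i) z = ∑ i ∈ s, conv (f i) z := by
  classical
  induction s using Finset.cons_induction with
  | empty => simpa using conv_zero_left z
  | cons a s ha ih =>
    rw [Finset.sum_cons, Finset.sum_cons,
      conv_add_left hξ (hf a (Finset.mem_cons_self a s))
        (novCond_finsetSum s f fun i hi => hf i (Finset.mem_cons_of_mem hi)) hz,
      ih fun i hi => hf i (Finset.mem_cons_of_mem hi)]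

end MuAux
namespace MuAux
open Function

variable {G : Type*} [Group G]

lemma pair_integrand_support_finite {ξ : G → ℝ} (hξ : ∀ a b : G, ξ (a * b) = ξ a + ξ b)
    {x z : G → ℤ} (hx : NovCond ξ x) (hz : NovCond ξ z)
    {Q : G → Prop} [DecidablePred Q] {c : ℝ} (hQ : ∀ g, Q g → c ≤ ξ g) (w : G → G → ℝ) :
    (support fun p : G × G =>
      if Q (p.1 * p.2) then w p.1 p.2 * ((x p.1 * z p.2 : ℤ) : ℝ) else 0).Finite := by
  apply Set.Finite.subset (pair_finite hx hz c)
  intro p hp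
  simp only [mem_support] at hp
  by_cases hQ' : Q (p.1 * p.2)
  · rw [if_pos hQ'] at hp
    have hxz : (x p.1 * z p.2 : ℤ) ≠ 0 := by
      intro h
      apply hp
      rw [h]
      simp
    rcases mul_ne_zero_iff.1 hxz with ⟨h1, h2⟩
    refine ⟨h1, h2, ?_⟩
    have := hQ _ hQ'
    rwa [hξ] at this
  · exact absurd (if_neg hQ') hp

lemma triple_integrand_support_finite {ξ : G → ℝ} (hξ : ∀ a b : G, ξ (a * b) = ξ a + ξ b)
    {x y z : G → ℤ} (hx : NovCond ξ x) (hy : NovCond ξ y) (hz : NovCond ξ z)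
    {Q : G → Prop} [DecidablePred Q] {c : ℝ} (hQ : ∀ g, Q g → c ≤ ξ g) (w : G × G × G → ℝ) :
    (support fun q : G × G × G =>
      if Q (q.1 * q.2.1 * q.2.2) then w q * ((x q.1 * y q.2.1 * z q.2.2 : ℤ) : ℝ) else 0).Finite := by
  apply Set.Finite.subset (triple_finite hx hy hz c)
  intro q hq
  simp only [mem_support] at hq
  by_cases hQ' : Q (q.1 * q.2.1 * q.2.2)
  · rw [if_pos hQ'] at hq
    have hxyz : (x q.1 * y q.2.1 * z q.2.2 : ℤ) ≠ 0 := by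
      intro h
      apply hq
      rw [h]
      simp
    rcases mul_ne_zero_iff.1 hxyz with ⟨h12, h3⟩
    rcases mul_ne_zero_iff.1 h12 with ⟨h1, h2⟩
    refine ⟨h1, h2, h3, ?_⟩
    have := hQ _ hQ'
    rwa [hξ, hξ] at this
  · exact absurd (if_neg hQ') hq

/-- Expansion of a pair-type finsum with a convolution in the first slot into a
triple-type finsum. -/
lemma conv_expand_left {ξ : G → ℝ} (hξ : ∀ a b : G, ξ (a * b) = ξ a + ξ b)
    {x y z : G → ℤ} (hx : NovCond ξ x) (hy : NovCond ξ y) (hz : NovCond ξ z)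
    {Q : G → Prop} [DecidablePred Q] {c : ℝ} (hQ : ∀ g, Q g → c ≤ ξ g) (w : G → G → ℝ) :
    (∑ᶠ p : G × G, if Q (p.1 * p.2) then w p.1 p.2 * ((conv x y p.1 * z p.2 : ℤ) : ℝ) else 0)
      = ∑ᶠ q : G × G × G, if Q (q.1 * q.2.1 * q.2.2) then
          w (q.1 * q.2.1) q.2.2 * ((x q.1 * y q.2.1 * z q.2.2 : ℤ) : ℝ) else 0 := by
  classical
  set F : (G × G) × G → ℝ := fun t =>
    if Q (t.1.1 * t.1.2) then
      w t.1.1 t.1.2 * ((x t.2 * y (t.2⁻¹ * t.1.1) * z t.1.2 : ℤ) : ℝ) else 0 with hF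
  -- step 1: pointwise expansion of the convolution
  have step1 : ∀ p : G × G,
      (if Q (p.1 * p.2) then w p.1 p.2 * ((conv x y p.1 * z p.2 : ℤ) : ℝ) else 0)
        = ∑ᶠ h : G, F (p, h) := by
    intro p
    by_cases hQ' : Q (p.1 * p.2)
    · rw [if_pos hQ']
      have hconv : ((conv x y p.1 : ℤ) : ℝ) = ∑ᶠ h : G, ((x h * y (h⁻¹ * p.1) : ℤ) : ℝ) := by
        rw [conv]
        exact (Int.castAddHom ℝ).map_finsum (conv_support_finite hξ hx hy p.1)
      have hsupp : (support fun h : G => ((x h * y (h⁻¹ * p.1) : ℤ) : ℝ)).Finite := by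
        apply Set.Finite.subset (conv_support_finite hξ hx hy p.1)
        intro h hh
        simp only [mem_support, ne_eq, Int.cast_eq_zero] at hh
        exact hh
      calc w p.1 p.2 * ((conv x y p.1 * z p.2 : ℤ) : ℝ)
          = w p.1 p.2 * (((conv x y p.1 : ℤ) : ℝ) * ((z p.2 : ℤ) : ℝ)) := by push_cast; ring
        _ = w p.1 p.2 * ((∑ᶠ h : G, ((x h * y (h⁻¹ * p.1) : ℤ) : ℝ)) * ((z p.2 : ℤ) : ℝ)) := by
            rw [hconv]
        _ = ∑ᶠ h : G, w p.1 p.2 * (((x h * y (h⁻¹ * p.1) : ℤ) : ℝ) * ((z p.2 : ℤ) : ℝ)) := by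
            rw [finsum_mul' _ _ hsupp, mul_finsum' _ _ ?_]
            · apply Set.Finite.subset hsupp
              intro h hh
              simp only [mem_support, ne_eq] at hh ⊢
              intro h0
              exact hh (by rw [h0, zero_mul])
        _ = ∑ᶠ h : G, F (p, h) := by
            apply finsum_congr
            intro h
            rw [hF]
            simp only [if_pos hQ']
            push_cast
            ring
    · rw [if_neg hQ']
      symm
      apply finsum_eq_zero_of_forall_eq_zero
      intro h
      rw [hF]
      simp only [if_neg hQ']
  rw [finsum_congr step1]
  -- step 2: uncurry
  have hFfin : (support F).Finite := by
    apply Set.Finite.subset (Set.Finite.image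
      (fun q : G × G × G => ((q.1 * q.2.1, q.2.2), q.1))
      (triple_finite hx hy hz c))
    intro t ht
    simp only [mem_support, hF] at ht
    by_cases hQ' : Q (t.1.1 * t.1.2)
    · rw [if_pos hQ'] at ht
      have hprod : (x t.2 * y (t.2⁻¹ * t.1.1) * z t.1.2 : ℤ) ≠ 0 := by
        intro h0
        apply ht
        rw [h0]
        simp
      rcases mul_ne_zero_iff.1 hprod with ⟨h12, h3⟩
      rcases mul_ne_zero_iff.1 h12 with ⟨h1, h2⟩
      refine ⟨(t.2, t.2⁻¹ * t.1.1, t.1.2), ⟨h1, h2, h3, ?_⟩, ?_⟩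
      · have hx1 : ξ t.2 + ξ (t.2⁻¹ * t.1.1) = ξ t.1.1 := xi_inv_mul hξ _ _
        have hx2 : ξ (t.1.1 * t.1.2) = ξ t.1.1 + ξ t.1.2 := hξ _ _
        have := hQ _ hQ'
        simp only []
        linarith
      · simp only [mul_inv_cancel_left]
    · exact absurd (if_neg hQ') ht
  rw [← finsum_curry F hFfin]
  -- step 3: reindex by an explicit bijection
  refine (finsum_eq_of_bijective (fun q : G × G × G => ((q.1 * q.2.1, q.2.2), q.1)) ?_ ?_).symm
  · apply Function.bijective_iff_has_inverse.2
    refine ⟨fun t => (t.2, t.2⁻¹ * t.1.1, t.1.2), fun q => ?_, fun t => ?_⟩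
    · simp only [inv_mul_cancel_left]
    · simp only [mul_inv_cancel_left]
  · intro q
    rw [hF]
    simp only [inv_mul_cancel_left]

end MuAux
namespace MuAux
open Function

variable {G : Type*} [Group G]

/-- Expansion of a pair-type finsum with a convolution in the second slot into a
triple-type finsum. -/
lemma conv_expand_right {ξ : G → ℝ} (hξ : ∀ a b : G, ξ (a * b) = ξ a + ξ b)
    {x y z : G → ℤ} (hx : NovCond ξ x) (hy : NovCond ξ y) (hz : NovCond ξ z)
    {Q : G → Prop} [DecidablePred Q] {c : ℝ} (hQ : ∀ g, Q g → c ≤ ξ g) (w : G → G → ℝ) :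
    (∑ᶠ p : G × G, if Q (p.1 * p.2) then w p.1 p.2 * ((x p.1 * conv y z p.2 : ℤ) : ℝ) else 0)
      = ∑ᶠ q : G × G × G, if Q (q.1 * q.2.1 * q.2.2) then
          w q.1 (q.2.1 * q.2.2) * ((x q.1 * y q.2.1 * z q.2.2 : ℤ) : ℝ) else 0 := by
  classical
  set F : (G × G) × G → ℝ := fun t =>
    if Q (t.1.1 * t.1.2) then
      w t.1.1 t.1.2 * ((x t.1.1 * (y t.2 * z (t.2⁻¹ * t.1.2)) : ℤ) : ℝ) else 0 with hF
  have step1 : ∀ p : G × G,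
      (if Q (p.1 * p.2) then w p.1 p.2 * ((x p.1 * conv y z p.2 : ℤ) : ℝ) else 0)
        = ∑ᶠ h : G, F (p, h) := by
    intro p
    by_cases hQ' : Q (p.1 * p.2)
    · rw [if_pos hQ']
      have hconv : ((conv y z p.2 : ℤ) : ℝ) = ∑ᶠ h : G, ((y h * z (h⁻¹ * p.2) : ℤ) : ℝ) := by
        rw [conv]
        exact (Int.castAddHom ℝ).map_finsum (conv_support_finite hξ hy hz p.2)
      have hsupp : (support fun h : G => ((y h * z (h⁻¹ * p.2) : ℤ) : ℝ)).Finite := by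
        apply Set.Finite.subset (conv_support_finite hξ hy hz p.2)
        intro h hh
        simp only [mem_support, ne_eq, Int.cast_eq_zero] at hh
        exact hh
      calc w p.1 p.2 * ((x p.1 * conv y z p.2 : ℤ) : ℝ)
          = w p.1 p.2 * (((x p.1 : ℤ) : ℝ) * ((conv y z p.2 : ℤ) : ℝ)) := by push_cast; ring
        _ = w p.1 p.2 * (((x p.1 : ℤ) : ℝ) * ∑ᶠ h : G, ((y h * z (h⁻¹ * p.2) : ℤ) : ℝ)) := by
            rw [hconv]
        _ = ∑ᶠ h : G, w p.1 p.2 * (((x p.1 : ℤ) : ℝ) * ((y h * z (h⁻¹ * p.2) : ℤ) : ℝ)) := by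
            rw [mul_finsum' _ _ hsupp, mul_finsum' _ _ ?_]
            · apply Set.Finite.subset hsupp
              intro h hh
              simp only [mem_support, ne_eq] at hh ⊢
              intro h0
              exact hh (by rw [h0, mul_zero])
        _ = ∑ᶠ h : G, F (p, h) := by
            apply finsum_congr
            intro h
            rw [hF]
            simp only [if_pos hQ']
            push_cast
            ring
    · rw [if_neg hQ']
      symm
      apply finsum_eq_zero_of_forall_eq_zero
      intro h
      rw [hF]
      simp only [if_neg hQ']
  rw [finsum_congr step1]
  have hFfin : (support F).Finite := by
    apply Set.Finite.subset (Set.Finite.image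
      (fun q : G × G × G => ((q.1, q.2.1 * q.2.2), q.2.1))
      (triple_finite hx hy hz c))
    intro t ht
    simp only [mem_support, hF] at ht
    by_cases hQ' : Q (t.1.1 * t.1.2)
    · rw [if_pos hQ'] at ht
      have hprod : (x t.1.1 * (y t.2 * z (t.2⁻¹ * t.1.2)) : ℤ) ≠ 0 := by
        intro h0
        apply ht
        rw [h0]
        simp
      rcases mul_ne_zero_iff.1 hprod with ⟨h1, h23⟩
      rcases mul_ne_zero_iff.1 h23 with ⟨h2, h3⟩
      refine ⟨(t.1.1, t.2, t.2⁻¹ * t.1.2), ⟨h1, h2, h3, ?_⟩, ?_⟩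
      · have hx1 : ξ t.2 + ξ (t.2⁻¹ * t.1.2) = ξ t.1.2 := xi_inv_mul hξ _ _
        have hx2 : ξ (t.1.1 * t.1.2) = ξ t.1.1 + ξ t.1.2 := hξ _ _
        have := hQ _ hQ'
        simp only []
        linarith
      · simp only [mul_inv_cancel_left]
    · exact absurd (if_neg hQ') ht
  rw [← finsum_curry F hFfin]
  refine (finsum_eq_of_bijective (fun q : G × G × G => ((q.1, q.2.1 * q.2.2), q.2.1)) ?_ ?_).symm
  · apply Function.bijective_iff_has_inverse.2
    refine ⟨fun t => (t.1.1, t.2, t.2⁻¹ * t.1.2), fun q => ?_, fun t => ?_⟩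
    · simp only [inv_mul_cancel_left]
    · simp only [mul_inv_cancel_left]
  · intro q
    rw [hF]
    simp only [inv_mul_cancel_left, mul_assoc]

lemma mk_mul_comm (a b : G) : ConjClasses.mk (a * b) = ConjClasses.mk (b * a) := by
  rw [ConjClasses.mk_eq_mk_iff_isConj, isConj_iff]
  exact ⟨b, by group⟩

/-- Cyclic rotation of a triple-type finsum over a conjugacy class. -/
lemma rotate_sum {x y z : G → ℤ} (γ : ConjClasses G) (w : G → ℝ) :
    (∑ᶠ q : G × G × G, if ConjClasses.mk (q.1 * q.2.1 * q.2.2) = γ then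
        w q.1 * ((y q.1 * z q.2.1 * x q.2.2 : ℤ) : ℝ) else 0)
      = ∑ᶠ q : G × G × G, if ConjClasses.mk (q.1 * q.2.1 * q.2.2) = γ then
          w q.2.1 * ((x q.1 * y q.2.1 * z q.2.2 : ℤ) : ℝ) else 0 := by
  refine (finsum_eq_of_bijective (fun q : G × G × G => (q.2.1, q.2.2, q.1)) ?_ ?_).symm
  · apply Function.bijective_iff_has_inverse.2
    exact ⟨fun q => (q.2.2, q.1, q.2.1), fun q => rfl, fun q => rfl⟩
  · intro q
    have hmk : ConjClasses.mk (q.2.1 * q.2.2 * q.1) = ConjClasses.mk (q.1 * q.2.1 * q.2.2) := by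
      rw [mk_mul_comm, ← mul_assoc]
    simp only [hmk]
    by_cases h : ConjClasses.mk (q.1 * q.2.1 * q.2.2) = γ
    · rw [if_pos h, if_pos h]
      push_cast
      ring
    · rw [if_neg h, if_neg h]

end MuAux
namespace MuAux
open Function

variable {G : Type*} [Group G]

lemma conv_as_pair {ξ : G → ℝ} (hξ : ∀ a b : G, ξ (a * b) = ξ a + ξ b)
    {u v : G → ℤ} (hu : NovCond ξ u) (hv : NovCond ξ v) (g : G) :
    ((conv u v g : ℤ) : ℝ)
      = ∑ᶠ p : G × G, if p.1 * p.2 = g then (1 : ℝ) * ((u p.1 * v p.2 : ℤ) : ℝ) else 0 := by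
  have hQ : ∀ a : G, a = g → ξ g ≤ ξ a := by rintro a rfl; exact le_refl _
  have hsupp := pair_integrand_support_finite hξ hu hv hQ (fun _ _ => (1 : ℝ))
  rw [finsum_curry _ hsupp]
  have hinner : ∀ a : G,
      (∑ᶠ b : G, if a * b = g then (1 : ℝ) * ((u a * v b : ℤ) : ℝ) else 0)
        = ((u a * v (a⁻¹ * g) : ℤ) : ℝ) := by
    intro a
    rw [finsum_eq_single _ (a⁻¹ * g) (fun b hb => by
      rw [if_neg]
      intro hab
      exact hb (by rw [← hab, inv_mul_cancel_left]))]
    rw [if_pos (mul_inv_cancel_left a g), one_mul]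
  rw [finsum_congr hinner, conv]
  exact (Int.castAddHom ℝ).map_finsum (conv_support_finite hξ hu hv g)

lemma conv_assoc {ξ : G → ℝ} (hξ : ∀ a b : G, ξ (a * b) = ξ a + ξ b)
    {x y z : G → ℤ} (hx : NovCond ξ x) (hy : NovCond ξ y) (hz : NovCond ξ z) :
    conv (conv x y) z = conv x (conv y z) := by
  funext g
  apply Int.cast_injective (α := ℝ)
  have hQ : ∀ a : G, a = g → ξ g ≤ ξ a := by rintro a rfl; exact le_refl _
  rw [conv_as_pair hξ (novCond_conv hξ hx hy) hz g,
    conv_as_pair hξ hx (novCond_conv hξ hy hz) g,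
    conv_expand_left hξ hx hy hz hQ (fun _ _ => (1 : ℝ)),
    conv_expand_right hξ hx hy hz hQ (fun _ _ => (1 : ℝ))]

lemma matMulC_id_left {n : ℕ} (B : Fin n → Fin n → (G → ℤ)) :
    matMulC matId B = B := by
  funext i j
  show (∑ l : Fin n, conv (matId i l) (B l j)) = B i j
  rw [Finset.sum_eq_single i]
  · rw [show matId i i = oneF from if_pos rfl, conv_oneF_left]
  · intro l _ hl
    rw [show matId i l = 0 from if_neg (fun h => hl h.symm), conv_zero_left]
  · intro h
    exact absurd (Finset.mem_univ i) h

lemma matMulC_id_right {n : ℕ} (B : Fin n → Fin n → (G → ℤ)) :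
    matMulC B matId = B := by
  funext i j
  show (∑ l : Fin n, conv (B i l) (matId l j)) = B i j
  rw [Finset.sum_eq_single j]
  · rw [show matId j j = oneF from if_pos rfl, conv_oneF_right]
  · intro l _ hl
    rw [show matId l j = 0 from if_neg hl, conv_zero_right]
  · intro h
    exact absurd (Finset.mem_univ j) h

lemma matPow_one {n : ℕ} (A : Fin n → Fin n → (G → ℤ)) : matPow A 1 = A := by
  show matMulC A (matPow A 0) = A
  exact matMulC_id_right A

lemma novCond_matPow {ξ : G → ℝ} (hξ : ∀ a b : G, ξ (a * b) = ξ a + ξ b)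
    {n : ℕ} (A : Fin n → Fin n → (G → ℤ)) (hA : ∀ i j, NovCond ξ (A i j)) :
    ∀ p (i j : Fin n), NovCond ξ (matPow A p i j) := by
  intro p
  induction p with
  | zero =>
    intro i j
    show NovCond ξ (matId i j)
    by_cases h : i = j
    · rw [show matId i j = oneF from if_pos h]
      exact novCond_oneF
    · rw [show matId i j = 0 from if_neg h]
      exact novCond_zero
  | succ p ih =>
    intro i j
    show NovCond ξ (∑ l : Fin n, conv (A i l) (matPow A p l j))
    exact novCond_finsetSum _ _ fun l _ => novCond_conv hξ (hA i l) (ih l j)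

lemma matMulC_assoc {ξ : G → ℝ} (hξ : ∀ a b : G, ξ (a * b) = ξ a + ξ b)
    {n : ℕ} (X Y Z : Fin n → Fin n → (G → ℤ))
    (hX : ∀ i j, NovCond ξ (X i j)) (hY : ∀ i j, NovCond ξ (Y i j))
    (hZ : ∀ i j, NovCond ξ (Z i j)) :
    matMulC (matMulC X Y) Z = matMulC X (matMulC Y Z) := by
  funext i j
  show (∑ l : Fin n, conv ((matMulC X Y) i l) (Z l j))
      = ∑ k : Fin n, conv (X i k) ((matMulC Y Z) k j)
  calc (∑ l : Fin n, conv ((matMulC X Y) i l) (Z l j))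
      = ∑ l : Fin n, ∑ k : Fin n, conv (conv (X i k) (Y k l)) (Z l j) := by
        refine Finset.sum_congr rfl fun l _ => ?_
        exact conv_finsetSum_left hξ _ _ (hZ l j) fun k _ => novCond_conv hξ (hX i k) (hY k l)
    _ = ∑ k : Fin n, ∑ l : Fin n, conv (X i k) (conv (Y k l) (Z l j)) := by
        rw [Finset.sum_comm]
        refine Finset.sum_congr rfl fun k _ => Finset.sum_congr rfl fun l _ => ?_
        rw [conv_assoc hξ (hX i k) (hY k l) (hZ l j)]
    _ = ∑ k : Fin n, conv (X i k) ((matMulC Y Z) k j) := by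
        refine Finset.sum_congr rfl fun k _ => ?_
        exact (conv_finsetSum_right hξ _ _ (hX i k) fun l _ => novCond_conv hξ (hY k l) (hZ l j)).symm

lemma matPow_add {ξ : G → ℝ} (hξ : ∀ a b : G, ξ (a * b) = ξ a + ξ b)
    {n : ℕ} (A : Fin n → Fin n → (G → ℤ)) (hA : ∀ i j, NovCond ξ (A i j))
    (a b : ℕ) : matPow A (a + b) = matMulC (matPow A a) (matPow A b) := by
  induction a with
  | zero => rw [Nat.zero_add]; exact (matMulC_id_left (matPow A b)).symm
  | succ a ih =>
    have h1 : a + 1 + b = (a + b) + 1 := by omega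
    rw [h1]
    show matMulC A (matPow A (a + b)) = matMulC (matMulC A (matPow A a)) (matPow A b)
    rw [ih, matMulC_assoc hξ A (matPow A a) (matPow A b) hA
      (novCond_matPow hξ A hA a) (novCond_matPow hξ A hA b)]

end MuAux
namespace MuAux
open Function

variable {G : Type*} [Group G]

lemma hQgamma {ξ : G → ℝ} {ξΓ : ConjClasses G → ℝ}
    (hξΓ : ∀ g : G, ξΓ (ConjClasses.mk g) = ξ g) (γ : ConjClasses G) :
    ∀ g : G, ConjClasses.mk g = γ → ξΓ γ ≤ ξ g :=
  fun g h => le_of_eq (by rw [← h, hξΓ])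

lemma eps_support_finite {ξ : G → ℝ} {ξΓ : ConjClasses G → ℝ}
    (hξΓ : ∀ g : G, ξΓ (ConjClasses.mk g) = ξ g) (γ : ConjClasses G)
    {x : G → ℤ} (hx : NovCond ξ x) :
    (support fun g : G => if ConjClasses.mk g = γ then x g else 0).Finite := by
  apply Set.Finite.subset (hx (ξΓ γ))
  intro g hg
  simp only [mem_support] at hg
  by_cases h : ConjClasses.mk g = γ
  · rw [if_pos h] at hg
    exact ⟨hg, hQgamma hξΓ γ g h⟩
  · exact absurd (if_neg h) hg

lemma mMap_zero_right {ξ : G → ℝ} {ξΓ : ConjClasses G → ℝ} (x : G → ℤ) (γ : ConjClasses G) :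
    mMap ξ ξΓ x 0 γ = 0 := by
  simp [mMap]

lemma mMap_add_left {ξ : G → ℝ} (hξ : ∀ a b : G, ξ (a * b) = ξ a + ξ b)
    {ξΓ : ConjClasses G → ℝ} (hξΓ : ∀ g : G, ξΓ (ConjClasses.mk g) = ξ g)
    {γ : ConjClasses G} (hγ : ξΓ γ < 0)
    {x₁ x₂ z : G → ℤ} (h₁ : NovCond ξ x₁) (h₂ : NovCond ξ x₂) (hz : NovCond ξ z) :
    mMap ξ ξΓ (x₁ + x₂) z γ = mMap ξ ξΓ x₁ z γ + mMap ξ ξΓ x₂ z γ := by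
  have hQ := hQgamma hξΓ γ
  simp only [mMap, if_pos hγ]
  refine (finsum_congr (fun p => ?_)).trans (finsum_add_distrib
    (pair_integrand_support_finite hξ h₁ hz hQ (fun a b => ξ a / ξΓ γ))
    (pair_integrand_support_finite hξ h₂ hz hQ (fun a b => ξ a / ξΓ γ)))
  by_cases h : ConjClasses.mk (p.1 * p.2) = γ
  · simp only [if_pos h, Pi.add_apply]
    push_cast
    ring
  · simp only [if_neg h, add_zero]

lemma mMap_add_right {ξ : G → ℝ} (hξ : ∀ a b : G, ξ (a * b) = ξ a + ξ b)
    {ξΓ : ConjClasses G → ℝ} (hξΓ : ∀ g : G, ξΓ (ConjClasses.mk g) = ξ g)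
    {γ : ConjClasses G} (hγ : ξΓ γ < 0)
    {x z₁ z₂ : G → ℤ} (hx : NovCond ξ x) (h₁ : NovCond ξ z₁) (h₂ : NovCond ξ z₂) :
    mMap ξ ξΓ x (z₁ + z₂) γ = mMap ξ ξΓ x z₁ γ + mMap ξ ξΓ x z₂ γ := by
  have hQ := hQgamma hξΓ γ
  simp only [mMap, if_pos hγ]
  refine (finsum_congr (fun p => ?_)).trans (finsum_add_distrib
    (pair_integrand_support_finite hξ hx h₁ hQ (fun a b => ξ a / ξΓ γ))
    (pair_integrand_support_finite hξ hx h₂ hQ (fun a b => ξ a / ξΓ γ)))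
  by_cases h : ConjClasses.mk (p.1 * p.2) = γ
  · simp only [if_pos h, Pi.add_apply]
    push_cast
    ring
  · simp only [if_neg h, add_zero]

lemma mMap_finsetSum_left {ξ : G → ℝ} (hξ : ∀ a b : G, ξ (a * b) = ξ a + ξ b)
    {ξΓ : ConjClasses G → ℝ} (hξΓ : ∀ g : G, ξΓ (ConjClasses.mk g) = ξ g)
    {γ : ConjClasses G} (hγ : ξΓ γ < 0) {ι : Type*} (s : Finset ι)
    (f : ι → G → ℤ) {z : G → ℤ} (hf : ∀ i ∈ s, NovCond ξ (f i)) (hz : NovCond ξ z) :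
    mMap ξ ξΓ (∑ i ∈ s, f i) z γ = ∑ i ∈ s, mMap ξ ξΓ (f i) z γ := by
  classical
  induction s using Finset.cons_induction with
  | empty =>
    simp only [Finset.sum_empty]
    simp [mMap]
  | cons a s ha ih =>
    rw [Finset.sum_cons, Finset.sum_cons,
      mMap_add_left hξ hξΓ hγ (hf a (Finset.mem_cons_self a s))
        (novCond_finsetSum s f fun i hi => hf i (Finset.mem_cons_of_mem hi)) hz,
      ih fun i hi => hf i (Finset.mem_cons_of_mem hi)]

lemma mMap_finsetSum_right {ξ : G → ℝ} (hξ : ∀ a b : G, ξ (a * b) = ξ a + ξ b)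
    {ξΓ : ConjClasses G → ℝ} (hξΓ : ∀ g : G, ξΓ (ConjClasses.mk g) = ξ g)
    {γ : ConjClasses G} (hγ : ξΓ γ < 0) {ι : Type*} (s : Finset ι)
    {x : G → ℤ} (f : ι → G → ℤ) (hx : NovCond ξ x) (hf : ∀ i ∈ s, NovCond ξ (f i)) :
    mMap ξ ξΓ x (∑ i ∈ s, f i) γ = ∑ i ∈ s, mMap ξ ξΓ x (f i) γ := by
  classical
  induction s using Finset.cons_induction with
  | empty =>
    simp only [Finset.sum_empty]
    exact mMap_zero_right x γ
  | cons a s ha ih =>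
    rw [Finset.sum_cons, Finset.sum_cons,
      mMap_add_right hξ hξΓ hγ hx (hf a (Finset.mem_cons_self a s))
        (novCond_finsetSum s f fun i hi => hf i (Finset.mem_cons_of_mem hi)),
      ih fun i hi => hf i (Finset.mem_cons_of_mem hi)]

/-- The key local identity: `μ[(x*y)⊗z] = μ[x⊗(y*z)] + μ[y⊗(z*x)]`. -/
lemma mMap_conv {ξ : G → ℝ} (hξ : ∀ a b : G, ξ (a * b) = ξ a + ξ b)
    {ξΓ : ConjClasses G → ℝ} (hξΓ : ∀ g : G, ξΓ (ConjClasses.mk g) = ξ g)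
    {γ : ConjClasses G} (hγ : ξΓ γ < 0)
    {x y z : G → ℤ} (hx : NovCond ξ x) (hy : NovCond ξ y) (hz : NovCond ξ z) :
    mMap ξ ξΓ (conv x y) z γ = mMap ξ ξΓ x (conv y z) γ + mMap ξ ξΓ y (conv z x) γ := by
  have hQ := hQgamma hξΓ γ
  have e1 : mMap ξ ξΓ (conv x y) z γ
      = ∑ᶠ q : G × G × G, if ConjClasses.mk (q.1 * q.2.1 * q.2.2) = γ then
          (ξ (q.1 * q.2.1) / ξΓ γ) * ((x q.1 * y q.2.1 * z q.2.2 : ℤ) : ℝ) else 0 := by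
    simp only [mMap, if_pos hγ]
    exact conv_expand_left hξ hx hy hz hQ (fun a b => ξ a / ξΓ γ)
  have e2 : mMap ξ ξΓ x (conv y z) γ
      = ∑ᶠ q : G × G × G, if ConjClasses.mk (q.1 * q.2.1 * q.2.2) = γ then
          (ξ q.1 / ξΓ γ) * ((x q.1 * y q.2.1 * z q.2.2 : ℤ) : ℝ) else 0 := by
    simp only [mMap, if_pos hγ]
    exact conv_expand_right hξ hx hy hz hQ (fun a b => ξ a / ξΓ γ)
  have e3 : mMap ξ ξΓ y (conv z x) γ
      = ∑ᶠ q : G × G × G, if ConjClasses.mk (q.1 * q.2.1 * q.2.2) = γ then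
          (ξ q.2.1 / ξΓ γ) * ((x q.1 * y q.2.1 * z q.2.2 : ℤ) : ℝ) else 0 := by
    simp only [mMap, if_pos hγ]
    calc (∑ᶠ p : G × G, if ConjClasses.mk (p.1 * p.2) = γ then
          (ξ p.1 / ξΓ γ) * ((y p.1 * conv z x p.2 : ℤ) : ℝ) else 0)
        = ∑ᶠ q : G × G × G, if ConjClasses.mk (q.1 * q.2.1 * q.2.2) = γ then
            (ξ q.1 / ξΓ γ) * ((y q.1 * z q.2.1 * x q.2.2 : ℤ) : ℝ) else 0 :=
          conv_expand_right hξ hy hz hx hQ (fun a b => ξ a / ξΓ γ)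
      _ = _ := rotate_sum γ (fun a => ξ a / ξΓ γ)
  rw [e1, e2, e3]
  refine (finsum_congr (fun q => ?_)).trans (finsum_add_distrib
    (triple_integrand_support_finite hξ hx hy hz hQ (fun q => ξ q.1 / ξΓ γ))
    (triple_integrand_support_finite hξ hx hy hz hQ (fun q => ξ q.2.1 / ξΓ γ)))
  by_cases h : ConjClasses.mk (q.1 * q.2.1 * q.2.2) = γ
  · simp only [if_pos h]
    rw [hξ q.1 q.2.1]
    ring
  · simp only [if_neg h, add_zero]

lemma mMap_oneF {ξ : G → ℝ} (hξ : ∀ a b : G, ξ (a * b) = ξ a + ξ b)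
    {ξΓ : ConjClasses G → ℝ} (hξΓ : ∀ g : G, ξΓ (ConjClasses.mk g) = ξ g)
    {γ : ConjClasses G} (hγ : ξΓ γ < 0) {x : G → ℤ} (hx : NovCond ξ x) :
    mMap ξ ξΓ x oneF γ = ((epsC x γ : ℤ) : ℝ) := by
  have hQ := hQgamma hξΓ γ
  simp only [mMap, if_pos hγ]
  rw [finsum_curry _ (pair_integrand_support_finite hξ hx novCond_oneF hQ
    (fun a b => ξ a / ξΓ γ))]
  have hinner : ∀ a : G,
      (∑ᶠ b : G, if ConjClasses.mk (a * b) = γ then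
        (ξ a / ξΓ γ) * ((x a * oneF b : ℤ) : ℝ) else 0)
      = (if ConjClasses.mk a = γ then ((x a : ℤ) : ℝ) else 0) := by
    intro a
    rw [finsum_eq_single _ (1 : G) (fun b hb => by simp [oneF, hb])]
    simp only [mul_one]
    by_cases h : ConjClasses.mk a = γ
    · rw [if_pos h, if_pos h]
      have hxa : ξ a = ξΓ γ := by rw [← h, hξΓ]
      simp [oneF, hxa, div_self (ne_of_lt hγ)]
    · rw [if_neg h, if_neg h]
  rw [finsum_congr hinner]
  simp only [epsC]
  rw [show ((∑ᶠ g : G, if ConjClasses.mk g = γ then x g else 0 : ℤ) : ℝ)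
      = ∑ᶠ g : G, ((if ConjClasses.mk g = γ then x g else 0 : ℤ) : ℝ) from
    (Int.castAddHom ℝ).map_finsum (eps_support_finite hξΓ γ hx)]
  apply finsum_congr
  intro a
  split_ifs <;> simp

lemma epsC_add {ξ : G → ℝ}
    {ξΓ : ConjClasses G → ℝ} (hξΓ : ∀ g : G, ξΓ (ConjClasses.mk g) = ξ g)
    (γ : ConjClasses G) {x y : G → ℤ} (hx : NovCond ξ x) (hy : NovCond ξ y) :
    epsC (x + y) γ = epsC x γ + epsC y γ := by
  simp only [epsC]
  refine (finsum_congr (fun g => ?_)).trans (finsum_add_distrib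
    (eps_support_finite hξΓ γ hx) (eps_support_finite hξΓ γ hy))
  by_cases h : ConjClasses.mk g = γ
  · simp only [if_pos h, Pi.add_apply]
  · simp only [if_neg h, add_zero]

lemma epsC_zero (γ : ConjClasses G) : epsC (0 : G → ℤ) γ = 0 := by
  simp [epsC]

lemma epsC_finsetSum {ξ : G → ℝ}
    {ξΓ : ConjClasses G → ℝ} (hξΓ : ∀ g : G, ξΓ (ConjClasses.mk g) = ξ g)
    (γ : ConjClasses G) {ι : Type*} (s : Finset ι) (f : ι → G → ℤ)
    (hf : ∀ i ∈ s, NovCond ξ (f i)) :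
    epsC (∑ i ∈ s, f i) γ = ∑ i ∈ s, epsC (f i) γ := by
  classical
  induction s using Finset.cons_induction with
  | empty => simpa using epsC_zero γ
  | cons a s ha ih =>
    rw [Finset.sum_cons, Finset.sum_cons,
      epsC_add hξΓ γ (hf a (Finset.mem_cons_self a s))
        (novCond_finsetSum s f fun i hi => hf i (Finset.mem_cons_of_mem hi)),
      ih fun i hi => hf i (Finset.mem_cons_of_mem hi)]

end MuAux
namespace MuAux
open Function

variable {G : Type*} [Group G]

/-- The matrix-level recursion `G(p+1,q) = G(1,p+q) + G(p,q+1)`. -/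
lemma step_formula {ξ : G → ℝ} (hξ : ∀ a b : G, ξ (a * b) = ξ a + ξ b)
    {ξΓ : ConjClasses G → ℝ} (hξΓ : ∀ g : G, ξΓ (ConjClasses.mk g) = ξ g)
    {γ : ConjClasses G} (hγ : ξΓ γ < 0)
    {n : ℕ} (A : Fin n → Fin n → (G → ℤ)) (hA : ∀ i j, NovCond ξ (A i j)) (p q : ℕ) :
    (∑ k : Fin n, ∑ i : Fin n, mMap ξ ξΓ (matPow A (p + 1) k i) (matPow A q i k) γ)
      = (∑ k : Fin n, ∑ i : Fin n, mMap ξ ξΓ (A k i) (matPow A (p + q) i k) γ)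
        + (∑ k : Fin n, ∑ i : Fin n, mMap ξ ξΓ (matPow A p k i) (matPow A (q + 1) i k) γ) := by
  have hP := novCond_matPow hξ A hA
  calc (∑ k : Fin n, ∑ i : Fin n, mMap ξ ξΓ (matPow A (p + 1) k i) (matPow A q i k) γ)
      = ∑ k : Fin n, ∑ i : Fin n, ∑ l : Fin n,
          mMap ξ ξΓ (conv (A k l) (matPow A p l i)) (matPow A q i k) γ := by
        refine Finset.sum_congr rfl fun k _ => Finset.sum_congr rfl fun i _ => ?_
        show mMap ξ ξΓ (∑ l : Fin n, conv (A k l) (matPow A p l i)) (matPow A q i k) γ = _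
        exact mMap_finsetSum_left hξ hξΓ hγ _ _
          (fun l _ => novCond_conv hξ (hA k l) (hP p l i)) (hP q i k)
    _ = ∑ k : Fin n, ∑ i : Fin n, ∑ l : Fin n,
          (mMap ξ ξΓ (A k l) (conv (matPow A p l i) (matPow A q i k)) γ
            + mMap ξ ξΓ (matPow A p l i) (conv (matPow A q i k) (A k l)) γ) := by
        refine Finset.sum_congr rfl fun k _ => Finset.sum_congr rfl fun i _ =>
          Finset.sum_congr rfl fun l _ => ?_
        exact mMap_conv hξ hξΓ hγ (hA k l) (hP p l i) (hP q i k)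
    _ = (∑ k : Fin n, ∑ i : Fin n, ∑ l : Fin n,
          mMap ξ ξΓ (A k l) (conv (matPow A p l i) (matPow A q i k)) γ)
        + ∑ k : Fin n, ∑ i : Fin n, ∑ l : Fin n,
          mMap ξ ξΓ (matPow A p l i) (conv (matPow A q i k) (A k l)) γ := by
        simp only [Finset.sum_add_distrib]
    _ = (∑ k : Fin n, ∑ i : Fin n, mMap ξ ξΓ (A k i) (matPow A (p + q) i k) γ)
        + (∑ k : Fin n, ∑ i : Fin n, mMap ξ ξΓ (matPow A p k i) (matPow A (q + 1) i k) γ) := by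
        congr 1
        · -- first piece
          refine Finset.sum_congr rfl fun k _ => ?_
          rw [Finset.sum_comm]
          refine Finset.sum_congr rfl fun l _ => ?_
          calc (∑ i : Fin n, mMap ξ ξΓ (A k l) (conv (matPow A p l i) (matPow A q i k)) γ)
              = mMap ξ ξΓ (A k l) (∑ i : Fin n, conv (matPow A p l i) (matPow A q i k)) γ :=
                (mMap_finsetSum_right hξ hξΓ hγ _ _ (hA k l)
                  (fun i _ => novCond_conv hξ (hP p l i) (hP q i k))).symm
            _ = mMap ξ ξΓ (A k l) (matPow A (p + q) l k) γ := by
                rw [show (∑ i : Fin n, conv (matPow A p l i) (matPow A q i k))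
                    = matPow A (p + q) l k from by
                  rw [matPow_add hξ A hA p q]; rfl]
        · -- second piece
          calc (∑ k : Fin n, ∑ i : Fin n, ∑ l : Fin n,
                mMap ξ ξΓ (matPow A p l i) (conv (matPow A q i k) (A k l)) γ)
              = ∑ l : Fin n, ∑ i : Fin n, ∑ k : Fin n,
                mMap ξ ξΓ (matPow A p l i) (conv (matPow A q i k) (A k l)) γ := by
                calc (∑ k : Fin n, ∑ i : Fin n, ∑ l : Fin n,
                      mMap ξ ξΓ (matPow A p l i) (conv (matPow A q i k) (A k l)) γ)
                    = ∑ k : Fin n, ∑ l : Fin n, ∑ i : Fin n,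
                      mMap ξ ξΓ (matPow A p l i) (conv (matPow A q i k) (A k l)) γ :=
                      Finset.sum_congr rfl fun k _ => Finset.sum_comm
                  _ = ∑ l : Fin n, ∑ k : Fin n, ∑ i : Fin n,
                      mMap ξ ξΓ (matPow A p l i) (conv (matPow A q i k) (A k l)) γ :=
                      Finset.sum_comm
                  _ = ∑ l : Fin n, ∑ i : Fin n, ∑ k : Fin n,
                      mMap ξ ξΓ (matPow A p l i) (conv (matPow A q i k) (A k l)) γ :=
                      Finset.sum_congr rfl fun l _ => Finset.sum_comm
            _ = ∑ l : Fin n, ∑ i : Fin n,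
                mMap ξ ξΓ (matPow A p l i) (matPow A (q + 1) i l) γ := by
                refine Finset.sum_congr rfl fun l _ => Finset.sum_congr rfl fun i _ => ?_
                calc (∑ k : Fin n, mMap ξ ξΓ (matPow A p l i) (conv (matPow A q i k) (A k l)) γ)
                    = mMap ξ ξΓ (matPow A p l i) (∑ k : Fin n, conv (matPow A q i k) (A k l)) γ :=
                      (mMap_finsetSum_right hξ hξΓ hγ _ _ (hP p l i)
                        (fun k _ => novCond_conv hξ (hP q i k) (hA k l))).symm
                  _ = mMap ξ ξΓ (matPow A p l i) (matPow A (q + 1) i l) γ := by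
                      rw [show (∑ k : Fin n, conv (matPow A q i k) (A k l))
                          = matPow A (q + 1) i l from by
                        rw [matPow_add hξ A hA q 1, matPow_one]; rfl]
end MuAux
/-- The cyclic-symmetrization computation: for a `ξ`-regular matrix `A` and
`m ≥ 0`, for every conjugacy class `γ` with `ξ(γ) < 0`,
`∑_{i,k} μ[A_{ik} ⊗ (Aᵐ)_{ki}](γ) = ε(trace A^{m+1})(γ)/(m+1)`. -/
theorem mu_trace_power_formula
    {G : Type*} [Group G] (ξ : G → ℝ)
    (hξ : ∀ a b : G, ξ (a * b) = ξ a + ξ b)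
    (ξΓ : ConjClasses G → ℝ) (hξΓ : ∀ g : G, ξΓ (ConjClasses.mk g) = ξ g)
    {n : ℕ} (A : Fin n → Fin n → (G → ℤ))
    (hA : ∀ i j, NovCond ξ (A i j)) (hreg : XiRegular ξ A)
    (m : ℕ) (γ : ConjClasses G) (hγ : ξΓ γ < 0) :
    (∑ i : Fin n, ∑ k : Fin n, mMap ξ ξΓ (A i k) (matPow A m k i) γ) =
      (1 / ((m : ℝ) + 1)) *
        ((epsC (∑ i : Fin n, matPow A (m + 1) i i) γ : ℤ) : ℝ) := by
  have hP := MuAux.novCond_matPow hξ A hA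
  have key : ∀ j : ℕ, j ≤ m →
      (∑ k : Fin n, ∑ i : Fin n, mMap ξ ξΓ (matPow A (j + 1) k i) (matPow A (m - j) i k) γ)
        = ((j : ℝ) + 1) *
            ∑ k : Fin n, ∑ i : Fin n, mMap ξ ξΓ (A k i) (matPow A m i k) γ := by
    intro j
    induction j with
    | zero =>
      intro _
      simp only [Nat.zero_add, Nat.sub_zero, Nat.cast_zero, zero_add, one_mul]
      rw [MuAux.matPow_one A]
    | succ j ih =>
      intro hj1
      have hj : j ≤ m := by omega
      have harith1 : m - (j + 1) + 1 = m - j := by omega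
      have harith2 : j + 1 + (m - (j + 1)) = m := by omega
      have hstep := MuAux.step_formula hξ hξΓ hγ A hA (j + 1) (m - (j + 1))
      rw [harith1, harith2] at hstep
      rw [hstep, ih hj]
      push_cast
      ring
  have hkey := key m le_rfl
  rw [Nat.sub_self] at hkey
  have hS : (∑ k : Fin n, ∑ i : Fin n, mMap ξ ξΓ (matPow A (m + 1) k i) (matPow A 0 i k) γ)
      = ((epsC (∑ i : Fin n, matPow A (m + 1) i i) γ : ℤ) : ℝ) := by
    have h1 : ∀ k : Fin n,
        (∑ i : Fin n, mMap ξ ξΓ (matPow A (m + 1) k i) (matPow A 0 i k) γ)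
          = ((epsC (matPow A (m + 1) k k) γ : ℤ) : ℝ) := by
      intro k
      rw [Finset.sum_eq_single k ?_ ?_]
      · show mMap ξ ξΓ (matPow A (m + 1) k k) (matId k k) γ = _
        rw [show (matId k k : G → ℤ) = oneF from if_pos rfl]
        exact MuAux.mMap_oneF hξ hξΓ hγ (hP (m + 1) k k)
      · intro i _ hik
        show mMap ξ ξΓ (matPow A (m + 1) k i) (matId i k) γ = 0
        rw [show (matId i k : G → ℤ) = 0 from if_neg hik]
        exact MuAux.mMap_zero_right _ _
      · intro hk
        exact absurd (Finset.mem_univ k) hk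
    rw [Finset.sum_congr rfl (fun k _ => h1 k),
      MuAux.epsC_finsetSum hξΓ γ _ _ (fun i _ => hP (m + 1) i i)]
    push_cast
    rfl
  rw [hS] at hkey
  have hm : ((m : ℝ) + 1) ≠ 0 := by positivity
  rw [hkey]
  field_simp
end
end

section
/- For a $\xi$-regular matrix $A$ over $\widehat{\mathbb{Z}G}_\xi$, the composition of the Dennis trace with $\mu$ applied to the torsion class of $I - A$ satisfies $L(\tau(I-A)) = -\varepsilon\left(\sum_{m=1}^\infty \frac{\mathrm{trace}\,A^m}{m}\right) \in \widehat{\mathbb{Q}\Gamma}_\xi$. In particular $L$ restricted to the subgroup $\overline{W}$ takes values in $\widehat{\mathbb{Q}\Gamma}_\xi \subset \widehat{\mathbb{R}\Gamma}_\xi$, defining a homomorphism $\mathfrak{L}: \overline{W} \to \widehat{\mathbb{Q}\Gamma}_\xi$. -/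
noncomputable section
open scoped Classical

namespace NovAux
open Finset

variable {G : Type*} [Group G]

section basic
variable (ξ : G → ℝ)

lemma xi_one (hξ : ∀ a b : G, ξ (a * b) = ξ a + ξ b) : ξ 1 = 0 := by
  have := hξ 1 1; simp at this; linarith

lemma xi_invmul (hξ : ∀ a b : G, ξ (a * b) = ξ a + ξ b) (h x : G) : ξ (h⁻¹ * x) = ξ x - ξ h := by
  have := hξ h (h⁻¹ * x); simp at this; linarith

lemma xi_ofFn_prod (hξ : ∀ a b : G, ξ (a * b) = ξ a + ξ b) : ∀ (m : ℕ) (g : Fin m → G),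
    ξ (List.ofFn g).prod = ∑ j, ξ (g j) := by
  intro m
  induction m with
  | zero => intro g; simp [xi_one ξ hξ]
  | succ m ih =>
      intro g
      rw [List.ofFn_succ, List.prod_cons, hξ, Fin.sum_univ_succ, ih]

end basic

/-- Every NovCond function has a ξ-sup bound. -/
lemma nov_bound {ξ : G → ℝ} {l : G → ℤ} (h : NovCond ξ l) :
    ∃ s : ℝ, 0 ≤ s ∧ ∀ g, l g ≠ 0 → ξ g ≤ s := by
  classical
  have hfin := h 0
  set F := hfin.toFinset with hF
  refine ⟨(insert (0:ℝ) (F.image ξ)).max' ⟨0, mem_insert_self _ _⟩, ?_, ?_⟩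
  · exact le_max' _ _ (mem_insert_self _ _)
  · intro g hg
    rcases le_or_gt 0 (ξ g) with h0 | h0
    · have : g ∈ F := by simp [hF, Set.Finite.mem_toFinset]; exact ⟨hg, h0⟩
      exact le_max' _ _ (mem_insert_of_mem (mem_image_of_mem ξ this))
    · exact le_of_lt (lt_of_lt_of_le h0 (le_max' _ _ (mem_insert_self _ _)))

/-- nonzero entries bound the norm from below. -/
lemma exp_le_novNorm {ξ : G → ℝ} {l : G → ℤ} (h : NovCond ξ l)
    {g : G} (hg : l g ≠ 0) : Real.exp (ξ g) ≤ novNorm ξ l := by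
  obtain ⟨s, _, hs⟩ := nov_bound h
  apply le_csInf
  · exact ⟨Real.exp s, Real.exp_pos s, fun g' hg' => by
      rw [Real.log_exp]; exact hs g' hg'⟩
  · rintro t ⟨ht, hb⟩
    calc Real.exp (ξ g) ≤ Real.exp (Real.log t) := Real.exp_le_exp.2 (hb g hg)
    _ = t := Real.exp_log ht


section mat
variable {n : ℕ} (ξ : G → ℝ) (A : Fin n → Fin n → (G → ℤ))

/-- cycle bound from ξ-regularity -/
lemma cycle_bound (hA : ∀ i j, NovCond ξ (A i j)) {K : ℝ}
    (hreg2 : ∀ m : ℕ, ∀ i : Fin (m + 1) → Fin n,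
      (∏ j : Fin (m + 1), novNorm ξ (A (i j) (i (j + 1)))) ≤ Real.exp (K * (m + 1)))
    (m : ℕ) (C : Fin (m+1) → Fin n) (L : Fin (m+1) → G)
    (hL : ∀ t, A (C t) (C (t+1)) (L t) ≠ 0) :
    ∑ t, ξ (L t) ≤ K * (m+1) := by
  have h2 : (∏ t, Real.exp (ξ (L t))) ≤ ∏ t : Fin (m+1), novNorm ξ (A (C t) (C (t+1))) :=
    Finset.prod_le_prod (fun t _ => (Real.exp_pos _).le)
      (fun t _ => NovAux.exp_le_novNorm (hA _ _) (hL t))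
  have h3 := le_trans h2 (hreg2 m C)
  rw [← Real.exp_sum] at h3
  exact Real.exp_le_exp.1 h3

lemma matPow_zero_apply (k i : Fin n) (x : G) :
    matPow A 0 k i x = if k = i ∧ x = 1 then 1 else 0 := by
  show matId k i x = _
  unfold matId oneF
  by_cases h : k = i <;> by_cases h2 : x = 1 <;> simp [h, h2]

/-- decompose first step of a power -/
lemma pow_succ_ne_zero {m : ℕ} {k i : Fin n} {x : G}
    (h : matPow A (m+1) k i x ≠ 0) :
    ∃ l h₁, A k l h₁ ≠ 0 ∧ matPow A m l i (h₁⁻¹ * x) ≠ 0 := by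
  have h' : (∑ l : Fin n, conv (A k l) (matPow A m l i)) x ≠ 0 := h
  rw [Finset.sum_apply] at h'
  obtain ⟨l, _, hl⟩ := Finset.exists_ne_zero_of_sum_ne_zero h'
  have : ∃ h₁, A k l h₁ * matPow A m l i (h₁⁻¹ * x) ≠ 0 := by
    by_contra hc
    push_neg at hc
    exact hl (finsum_eq_zero_of_forall_eq_zero hc)
  obtain ⟨h₁, hh⟩ := this
  exact ⟨l, h₁, mul_ne_zero_iff.1 hh⟩

/-- sup bound for powers -/
lemma pow_xi_bound (hξ : ∀ a b : G, ξ (a * b) = ξ a + ξ b)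
    {S : ℝ} (hS : ∀ i j g, A i j g ≠ 0 → ξ g ≤ S) :
    ∀ (m : ℕ) (k i : Fin n) (x : G), matPow A m k i x ≠ 0 → ξ x ≤ m * S := by
  intro m
  induction m with
  | zero =>
      intro k i x hx
      rw [matPow_zero_apply] at hx
      have : x = 1 := by
        by_contra hx1; exact hx (by simp [hx1])
      subst this
      simp [NovAux.xi_one ξ hξ]
  | succ m ih =>
      intro k i x hx
      obtain ⟨l, h₁, hA1, hp⟩ := pow_succ_ne_zero A hx
      have e1 := NovAux.xi_invmul ξ hξ h₁ x
      have := ih l i (h₁⁻¹ * x) hp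
      have := hS k l h₁ hA1
      push_cast
      nlinarith [this]

/-- existence of a nonzero path for a nonzero power entry -/
lemma exists_path :
    ∀ (m : ℕ) (k i : Fin n) (x : G), matPow A m k i x ≠ 0 →
    ∃ (d : Fin m → Fin n) (g : Fin m → G),
      (List.ofFn g).prod = x ∧ (Fin.cons k d : Fin (m+1) → Fin n) (Fin.last m) = i ∧
      ∀ j : Fin m, A ((Fin.cons k d : Fin (m+1) → Fin n) j.castSucc)
        ((Fin.cons k d : Fin (m+1) → Fin n) j.succ) (g j) ≠ 0 := by
  intro m
  induction m with
  | zero =>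
      intro k i x hx
      rw [matPow_zero_apply] at hx
      have hki : k = i ∧ x = 1 := by
        by_contra hc; exact hx (by simp [hc])
      refine ⟨Fin.elim0, Fin.elim0, ?_, ?_, fun j => j.elim0⟩
      · simp [hki.2]
      · simpa using hki.1
  | succ m ih =>
      intro k i x hx
      obtain ⟨l, h₁, hA1, hp⟩ := pow_succ_ne_zero A hx
      obtain ⟨d', g', hprod, hend, hedge⟩ := ih l i (h₁⁻¹ * x) hp
      refine ⟨Fin.cons l d', Fin.cons h₁ g', ?_, ?_, ?_⟩
      · rw [List.ofFn_succ]
        simp only [Fin.cons_zero, Fin.cons_succ, List.prod_cons]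
        rw [show (List.ofFn fun i => g' i) = List.ofFn g' from rfl, hprod,
          mul_inv_cancel_left]
      · rw [← Fin.succ_last, Fin.cons_succ]; exact hend
      · intro j
        induction j using Fin.cases with
        | zero =>
            have e1 : (Fin.castSucc (0 : Fin (m+1))) = 0 := Fin.castSucc_zero
            rw [e1, Fin.cons_zero, Fin.cons_succ, Fin.cons_zero]
            exact hA1
        | succ j' =>
            simp only [← Fin.succ_castSucc, Fin.cons_succ]
            exact hedge j'

/-- closing a path into a cycle -/
lemma close_bound (hξ : ∀ a b : G, ξ (a * b) = ξ a + ξ b)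
    (hA : ∀ i j, NovCond ξ (A i j)) {K : ℝ}
    (hreg2 : ∀ m : ℕ, ∀ i : Fin (m + 1) → Fin n,
      (∏ j : Fin (m + 1), novNorm ξ (A (i j) (i (j + 1)))) ≤ Real.exp (K * (m + 1)))
    (m : ℕ) (k i : Fin n) (x h : G)
    (hp : matPow A m k i x ≠ 0) (hc : A i k h ≠ 0) :
    ξ h + ξ x ≤ K * (m+1) := by
  obtain ⟨d, g, hprod, hend, hedge⟩ := exists_path A m k i x hp
  have hL : ∀ t : Fin (m+1), A ((Fin.cons k d : Fin (m+1) → Fin n) t)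
      ((Fin.cons k d : Fin (m+1) → Fin n) (t+1)) ((Fin.snoc g h : Fin (m+1) → G) t) ≠ 0 := by
    intro t
    induction t using Fin.lastCases with
    | last =>
        rw [Fin.last_add_one, Fin.snoc_last, Fin.cons_zero, hend]
        exact hc
    | cast j =>
        rw [Fin.coeSucc_eq_succ, Fin.snoc_castSucc]
        exact hedge j
  have hb := cycle_bound ξ A hA hreg2 m _ _ hL
  rw [Fin.sum_univ_castSucc] at hb
  simp only [Fin.snoc_castSucc, Fin.snoc_last] at hb
  have := NovAux.xi_ofFn_prod ξ hξ m g
  rw [hprod] at this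
  linarith

/-- bound on traces -/
lemma trace_bound (hξ : ∀ a b : G, ξ (a * b) = ξ a + ξ b)
    (hA : ∀ i j, NovCond ξ (A i j)) {K : ℝ}
    (hreg2 : ∀ m : ℕ, ∀ i : Fin (m + 1) → Fin n,
      (∏ j : Fin (m + 1), novNorm ξ (A (i j) (i (j + 1)))) ≤ Real.exp (K * (m + 1)))
    (m : ℕ) (i : Fin n) (x : G)
    (hp : matPow A (m+1) i i x ≠ 0) : ξ x ≤ K * (m+1) := by
  obtain ⟨l, h₁, hA1, hpw⟩ := pow_succ_ne_zero A hp
  have := close_bound ξ A hξ hA hreg2 m l i (h₁⁻¹ * x) h₁ hpw hA1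
  have e1 := NovAux.xi_invmul ξ hξ h₁ x
  linarith


end mat

/-- generic helpers -/
lemma ite_sum {M : Type*} [AddCommMonoid M] {P : Prop} [Decidable P] {α : Type*}
    (s : Finset α) (F : α → M) :
    (if P then ∑ m ∈ s, F m else 0) = ∑ m ∈ s, if P then F m else 0 := by
  split_ifs with h
  · rfl
  · simp

lemma sum_piFinset_cons {M : Type*} [AddCommMonoid M] {β : Type*}
    (m : ℕ) (T : Finset β) (F : (Fin (m+1) → β) → M) :
    ∑ f ∈ Fintype.piFinset (fun _ : Fin (m+1) => T), F f
      = ∑ a ∈ T, ∑ f' ∈ Fintype.piFinset (fun _ : Fin m => T), F (Fin.cons a f') := by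
  classical
  rw [← Finset.sum_product']
  apply Finset.sum_nbij' (i := fun f => ((f 0 : β), (Fin.tail f : Fin m → β)))
    (j := fun p => (Fin.cons p.1 p.2 : Fin (m+1) → β))
  · intro f hf
    rw [Fintype.mem_piFinset] at hf
    rw [Finset.mem_product]
    exact ⟨hf 0, by rw [Fintype.mem_piFinset]; intro a; exact hf a.succ⟩
  · intro p hp
    rw [Finset.mem_product] at hp
    rw [Fintype.mem_piFinset]
    intro a
    induction a using Fin.cases with
    | zero => rw [Fin.cons_zero]; exact hp.1
    | succ a' => rw [Fin.cons_succ]; exact Fintype.mem_piFinset.1 hp.2 a'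
  · intro f _; exact Fin.cons_self_tail f
  · intro p _; ext <;> simp [Fin.tail_cons]
  · intro f _; rw [Fin.cons_self_tail]

section paths
variable {n : ℕ} (A : Fin n → Fin n → (G → ℤ))

def pathEnd (m : ℕ) (k : Fin n) (d : Fin m → Fin n) : Fin n :=
  (Fin.cons k d : Fin (m+1) → Fin n) (Fin.last m)

def pathProd (m : ℕ) (k : Fin n) (d : Fin m → Fin n) (g : Fin m → G) : ℤ :=
  ∏ j : Fin m, A ((Fin.cons k d : Fin (m+1) → Fin n) j.castSucc)
    ((Fin.cons k d : Fin (m+1) → Fin n) j.succ) (g j)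

lemma pathEnd_cons (m : ℕ) (k l : Fin n) (d' : Fin m → Fin n) :
    pathEnd (m+1) k (Fin.cons l d') = pathEnd m l d' := by
  unfold pathEnd
  rw [← Fin.succ_last, Fin.cons_succ]

lemma pathProd_cons (m : ℕ) (k l : Fin n) (d' : Fin m → Fin n) (h : G) (g' : Fin m → G) :
    pathProd A (m+1) k (Fin.cons l d') (Fin.cons h g')
      = A k l h * pathProd A m l d' g' := by
  unfold pathProd
  rw [Fin.prod_univ_succ]
  simp only [Fin.castSucc_zero, Fin.cons_zero, Fin.cons_succ, ← Fin.succ_castSucc]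

lemma ofFn_cons_prod (m : ℕ) (h : G) (g' : Fin m → G) :
    (List.ofFn (Fin.cons h g' : Fin (m+1) → G)).prod = h * (List.ofFn g').prod := by
  rw [List.ofFn_succ]
  simp only [Fin.cons_zero, Fin.cons_succ, List.prod_cons]

/-- Expansion of matrix powers as sums over paths. -/
lemma pow_eq_pathsum (ξ : G → ℝ) (hξ : ∀ a b : G, ξ (a * b) = ξ a + ξ b)
    {S : ℝ} (hS0 : 0 ≤ S) (hS : ∀ i j g, A i j g ≠ 0 → ξ g ≤ S) :
    ∀ (m : ℕ) (k i : Fin n) (x : G) (T : Finset G),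
    (∀ y : G, (∃ a b, A a b y ≠ 0) → ξ x - m * S ≤ ξ y → y ∈ T) →
    matPow A m k i x = ∑ d : Fin m → Fin n, ∑ g ∈ Fintype.piFinset (fun _ : Fin m => T),
      if (List.ofFn g).prod = x ∧ pathEnd m k d = i
      then pathProd A m k d g else 0 := by
  intro m
  induction m with
  | zero =>
      intro k i x T _
      have huniq : ∀ f : Fin 0 → G, f = Fin.elim0 := fun f => Subsingleton.elim _ _
      have hpi : Fintype.piFinset (fun _ : Fin 0 => T) = {Fin.elim0} := by
        ext f
        simp only [Fintype.mem_piFinset, Finset.mem_singleton]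
        constructor
        · intro _; exact huniq f
        · intro _ a; exact a.elim0
      rw [Fintype.sum_eq_single (Fin.elim0 : Fin 0 → Fin n)
        (fun x hx => absurd (Subsingleton.elim x Fin.elim0) hx), hpi,
        Finset.sum_singleton, matPow_zero_apply]
      have hofn : (List.ofFn (Fin.elim0 : Fin 0 → G)).prod = 1 := by simp
      have hend : pathEnd 0 k Fin.elim0 = k := rfl
      have hpp : pathProd A 0 k Fin.elim0 Fin.elim0 = 1 := by
        unfold pathProd; simp
      rw [hofn, hend, hpp]
      apply if_congr _ rfl rfl
      constructor
      · rintro ⟨h1, h2⟩; exact ⟨h2.symm, h1⟩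
      · rintro ⟨h1, h2⟩; exact ⟨h2, h1.symm⟩
  | succ m ih =>
      intro k i x T hT
      have expand : matPow A (m+1) k i x = ∑ l : Fin n, conv (A k l) (matPow A m l i) x := by
        rw [show matPow A (m+1) = matMulC A (matPow A m) from rfl]
        exact Finset.sum_apply x Finset.univ _
      rw [expand]
      have hconv : ∀ l : Fin n, conv (A k l) (matPow A m l i) x
          = ∑ h ∈ T, A k l h * matPow A m l i (h⁻¹ * x) := by
        intro l
        apply finsum_eq_sum_of_support_subset
        intro h hh
        have hne : A k l h * matPow A m l i (h⁻¹ * x) ≠ 0 := hh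
        have hh' := mul_ne_zero_iff.1 hne
        have b1 : ξ h ≤ S := hS k l h hh'.1
        have b2 : ξ (h⁻¹ * x) ≤ m * S := pow_xi_bound ξ A hξ hS m l i _ hh'.2
        have b3 : ξ (h⁻¹ * x) = ξ x - ξ h := NovAux.xi_invmul ξ hξ h x
        apply hT h ⟨k, l, hh'.1⟩
        push_cast
        nlinarith
      simp_rw [hconv]
      have hrep : ∀ l : Fin n, ∀ h ∈ T, A k l h * matPow A m l i (h⁻¹ * x)
          = A k l h * ∑ d' : Fin m → Fin n, ∑ g' ∈ Fintype.piFinset (fun _ : Fin m => T),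
              (if (List.ofFn g').prod = h⁻¹ * x ∧ pathEnd m l d' = i
               then pathProd A m l d' g' else 0) := by
        intro l h _
        by_cases hz : A k l h = 0
        · rw [hz, zero_mul, zero_mul]
        · congr 1
          apply ih l i (h⁻¹ * x) T
          intro y hy hy2
          have b1 : ξ h ≤ S := hS k l h hz
          have b3 : ξ (h⁻¹ * x) = ξ x - ξ h := NovAux.xi_invmul ξ hξ h x
          apply hT y hy
          push_cast
          nlinarith
      rw [Finset.sum_congr rfl (fun l _ => Finset.sum_congr rfl (hrep l))]
      -- now massage the RHS
      rw [← Fintype.piFinset_univ (α := Fin (m+1)) (β := fun _ => Fin n)]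
      rw [sum_piFinset_cons m (Finset.univ : Finset (Fin n))]
      apply Finset.sum_congr rfl
      intro l _
      rw [Fintype.piFinset_univ]
      simp_rw [Finset.mul_sum]
      rw [Finset.sum_comm]
      apply Finset.sum_congr rfl
      intro d' _
      rw [sum_piFinset_cons m T]
      apply Finset.sum_congr rfl
      intro h hh
      apply Finset.sum_congr rfl
      intro g' _
      rw [mul_ite, mul_zero, pathProd_cons, pathEnd_cons, ofFn_cons_prod]
      apply if_congr _ rfl rfl
      rw [eq_inv_mul_iff_mul_eq]
end paths

section rot
variable {n : ℕ} (A : Fin n → Fin n → (G → ℤ))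

lemma mk_mul_comm (a b : G) : ConjClasses.mk (a * b) = ConjClasses.mk (b * a) := by
  rw [ConjClasses.mk_eq_mk_iff_isConj]
  exact isConj_iff.2 ⟨a⁻¹, by group⟩

lemma rot1 (m : ℕ) (g : Fin (m+1) → G) :
    ConjClasses.mk (List.ofFn (fun j : Fin (m+1) => g (j+1))).prod
      = ConjClasses.mk (List.ofFn g).prod := by
  have e1 : (List.ofFn (fun j : Fin (m+1) => g (j+1)))
      = (List.ofFn fun j' : Fin m => g j'.succ) ++ [g 0] := by
    rw [List.ofFn_succ' (fun j : Fin (m+1) => g (j+1))]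
    simp only [Fin.coeSucc_eq_succ, Fin.last_add_one]
    rw [List.concat_eq_append]
  have e2 : List.ofFn g = g 0 :: (List.ofFn fun j' : Fin m => g j'.succ) := List.ofFn_succ
  rw [e1, e2]
  simp only [List.prod_append, List.prod_cons, List.prod_nil, mul_one]
  exact mk_mul_comm _ _

open Fin.NatCast in
lemma rotk (m : ℕ) : ∀ (r : ℕ) (g : Fin (m+1) → G),
    ConjClasses.mk (List.ofFn (fun j : Fin (m+1) => g (j + (r : Fin (m+1))))).prod
      = ConjClasses.mk (List.ofFn g).prod := by
  intro r
  induction r with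
  | zero => intro g; simp
  | succ r ih =>
      intro g
      have e : (fun j : Fin (m+1) => g (j + ((r+1 : ℕ) : Fin (m+1))))
          = fun j : Fin (m+1) => (fun t => g (t + 1)) (j + (r : Fin (m+1))) := by
        funext j
        push_cast
        rw [add_assoc]
      rw [e, ih (fun t => g (t + 1)), rot1]

open Fin.NatCast in
lemma rot_fin (m : ℕ) (r : Fin (m+1)) (g : Fin (m+1) → G) :
    ConjClasses.mk (List.ofFn (fun j : Fin (m+1) => g (j + r))).prod
      = ConjClasses.mk (List.ofFn g).prod := by
  have := rotk m r.val g
  rwa [Fin.cast_val_eq_self] at this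

def cycW (m : ℕ) (c : Fin (m+1) → Fin n) (g : Fin (m+1) → G) : ℤ :=
  ∏ t : Fin (m+1), A (c t) (c (t+1)) (g t)

lemma cycW_rot (m : ℕ) (r : Fin (m+1)) (c : Fin (m+1) → Fin n) (g : Fin (m+1) → G) :
    cycW A m (fun t => c (t + r)) (fun t => g (t + r)) = cycW A m c g := by
  unfold cycW
  apply Fintype.prod_bijective (fun t : Fin (m+1) => t + r) (Equiv.addRight r).bijective
  intro t
  show A (c (t + r)) (c (t + 1 + r)) (g (t + r)) = A (c (t + r)) (c (t + r + 1)) (g (t + r))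
  rw [add_right_comm t 1 r]

/-- The key rotation-averaging identity. -/
lemma walk_rot (ξ : G → ℝ) (hξ : ∀ a b : G, ξ (a * b) = ξ a + ξ b)
    (ξΓ : ConjClasses G → ℝ) (hξΓ : ∀ g : G, ξΓ (ConjClasses.mk g) = ξ g)
    (γ : ConjClasses G) (m : ℕ) (Λ : Finset G) :
    ((m:ℝ)+1) * (∑ c : Fin (m+1) → Fin n, ∑ g ∈ Fintype.piFinset (fun _ : Fin (m+1) => Λ),
        if ConjClasses.mk (List.ofFn g).prod = γ then ξ (g 0) * (cycW A m c g : ℝ) else 0)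
      = ξΓ γ * ∑ c : Fin (m+1) → Fin n, ∑ g ∈ Fintype.piFinset (fun _ : Fin (m+1) => Λ),
          if ConjClasses.mk (List.ofFn g).prod = γ then (cycW A m c g : ℝ) else 0 := by
  classical
  set P := Fintype.piFinset (fun _ : Fin (m+1) => Λ) with hP
  have hrot : ∀ r : Fin (m+1),
      (∑ c : Fin (m+1) → Fin n, ∑ g ∈ P,
        if ConjClasses.mk (List.ofFn g).prod = γ then ξ (g r) * (cycW A m c g : ℝ) else 0)
      = ∑ c : Fin (m+1) → Fin n, ∑ g ∈ P,
        if ConjClasses.mk (List.ofFn g).prod = γ then ξ (g 0) * (cycW A m c g : ℝ) else 0 := by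
    intro r
    rw [← Finset.sum_product', ← Finset.sum_product']
    apply Finset.sum_nbij' (i := fun p : (Fin (m+1) → Fin n) × (Fin (m+1) → G) =>
        ((fun t => p.1 (t + r), fun t => p.2 (t + r)) : (Fin (m+1) → Fin n) × (Fin (m+1) → G)))
      (j := fun p => (fun t => p.1 (t + (-r)), fun t => p.2 (t + (-r))))
    · intro p hp
      rw [Finset.mem_product] at hp ⊢
      refine ⟨Finset.mem_univ _, ?_⟩
      rw [hP, Fintype.mem_piFinset]
      intro a
      exact Fintype.mem_piFinset.1 hp.2 _
    · intro p hp
      rw [Finset.mem_product] at hp ⊢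
      refine ⟨Finset.mem_univ _, ?_⟩
      rw [hP, Fintype.mem_piFinset]
      intro a
      exact Fintype.mem_piFinset.1 hp.2 _
    · intro p _
      ext t <;> simp [add_assoc]
    · intro p _
      ext t <;> simp [add_assoc]
    · intro p _
      have h1 : ConjClasses.mk (List.ofFn (fun t : Fin (m+1) => p.2 (t + r))).prod
          = ConjClasses.mk (List.ofFn p.2).prod := rot_fin m r p.2
      show (if ConjClasses.mk (List.ofFn p.2).prod = γ
            then ξ (p.2 r) * (cycW A m p.1 p.2 : ℝ) else 0)
          = if ConjClasses.mk (List.ofFn (fun t : Fin (m+1) => p.2 (t + r))).prod = γ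
            then ξ (p.2 (0 + r)) * (cycW A m (fun t => p.1 (t+r)) (fun t => p.2 (t+r)) : ℝ)
            else 0
      rw [h1, cycW_rot, zero_add]
  have hsum : ∑ r : Fin (m+1), (∑ c : Fin (m+1) → Fin n, ∑ g ∈ P,
      if ConjClasses.mk (List.ofFn g).prod = γ then ξ (g r) * (cycW A m c g : ℝ) else 0)
      = ξΓ γ * ∑ c : Fin (m+1) → Fin n, ∑ g ∈ P,
          if ConjClasses.mk (List.ofFn g).prod = γ then (cycW A m c g : ℝ) else 0 := by
    rw [Finset.sum_comm]
    rw [Finset.mul_sum]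
    apply Finset.sum_congr rfl
    intro c _
    rw [Finset.sum_comm, Finset.mul_sum]
    apply Finset.sum_congr rfl
    intro g _
    rw [← ite_sum]
    by_cases hc : ConjClasses.mk (List.ofFn g).prod = γ
    · rw [if_pos hc, if_pos hc, ← Finset.sum_mul]
      have : ∑ r : Fin (m+1), ξ (g r) = ξΓ γ := by
        rw [← NovAux.xi_ofFn_prod ξ hξ (m+1) g, ← hξΓ, hc]
      rw [this]
    · rw [if_neg hc, if_neg hc, mul_zero]
  rw [← hsum]
  rw [Finset.sum_congr rfl (fun r _ => hrot r)]
  rw [Finset.sum_const, Finset.card_univ, Fintype.card_fin, nsmul_eq_mul]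
  push_cast
  ring
end rot

section reindex
variable {n : ℕ} (A : Fin n → Fin n → (G → ℤ))

/-- closing a rooted path into a cyclic vertex function (trace side) -/
def Phi (m : ℕ) (D : Fin (m+1) → Fin n) : Fin (m+1) → Fin n :=
  Fin.cons (D (Fin.last m)) (fun j' : Fin m => D j'.castSucc)

lemma Phi_add_one (m : ℕ) (D : Fin (m+1) → Fin n) (t : Fin (m+1)) :
    Phi m D (t + 1) = D t := by
  induction t using Fin.lastCases with
  | last => rw [Fin.last_add_one]; exact Fin.cons_zero _ _
  | cast t' =>
      rw [Fin.coeSucc_eq_succ]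
      exact Fin.cons_succ _ _ _

lemma Phi_bijective (m : ℕ) : Function.Bijective (Phi (n := n) m) := by
  rw [Function.bijective_iff_has_inverse]
  refine ⟨fun c t => c (t + 1), ?_, ?_⟩
  · intro D; funext t; exact Phi_add_one m D t
  · intro c
    funext t
    induction t using Fin.cases with
    | zero =>
        show (Phi m (fun t => c (t+1))) 0 = c 0
        unfold Phi
        rw [Fin.cons_zero]
        show c (Fin.last m + 1) = c 0
        rw [Fin.last_add_one]
    | succ t' =>
        show (Phi m (fun t => c (t+1))) t'.succ = c t'.succ
        unfold Phi
        rw [Fin.cons_succ]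
        show c (t'.castSucc + 1) = c t'.succ
        rw [Fin.coeSucc_eq_succ]

lemma pathProd_to_cycW (m : ℕ) (D : Fin (m+1) → Fin n) (g : Fin (m+1) → G) :
    pathProd A (m+1) (D (Fin.last m)) D g = cycW A m (Phi m D) g := by
  unfold pathProd cycW
  apply Finset.prod_congr rfl
  intro j _
  have hca : (Fin.cons (D (Fin.last m)) D : Fin (m+2) → Fin n) j.castSucc = Phi m D j := by
    induction j using Fin.cases with
    | zero =>
        rw [Fin.castSucc_zero, Fin.cons_zero]
        show D (Fin.last m) = Phi m D 0
        unfold Phi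
        rw [Fin.cons_zero]
    | succ j' =>
        rw [← Fin.succ_castSucc, Fin.cons_succ]
        unfold Phi
        rw [Fin.cons_succ]
  have hcb : (Fin.cons (D (Fin.last m)) D : Fin (m+2) → Fin n) j.succ = Phi m D (j + 1) := by
    rw [Fin.cons_succ, Phi_add_one]
  rw [hca, hcb]

/-- closing edge plus path into a cyclic vertex function (L side) -/
def Phi' (m : ℕ) (v : Fin (m+1) → Fin n) : Fin (m+1) → Fin n :=
  fun t => v (t + Fin.last m)

lemma one_add_last (m : ℕ) : (1 : Fin (m+1)) + Fin.last m = 0 :=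
  (add_comm _ _).trans (Fin.last_add_one m)

lemma Phi'_bijective (m : ℕ) : Function.Bijective (Phi' (n := n) m) := by
  rw [Function.bijective_iff_has_inverse]
  refine ⟨fun c t => c (t + 1), ?_, ?_⟩
  · intro v; funext t
    show v (t + 1 + Fin.last m) = v t
    rw [add_assoc, one_add_last, add_zero]
  · intro c; funext t
    show c (t + Fin.last m + 1) = c t
    rw [add_assoc, Fin.last_add_one, add_zero]

lemma close_to_cycW (m : ℕ) (v : Fin (m+1) → Fin n) (p1 : G) (g' : Fin m → G) :
    A (v (Fin.last m)) (v 0) p1 * pathProd A m (v 0) (Fin.tail v) g'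
      = cycW A m (Phi' m v) (Fin.cons p1 g') := by
  unfold cycW
  rw [Fin.prod_univ_succ]
  have h0 : A (Phi' m v 0) (Phi' m v (0 + 1)) ((Fin.cons p1 g' : Fin (m+1) → G) 0)
      = A (v (Fin.last m)) (v 0) p1 := by
    rw [Fin.cons_zero]
    unfold Phi'
    rw [zero_add, zero_add, one_add_last]
  rw [h0]
  congr 1
  unfold pathProd
  apply Finset.prod_congr rfl
  intro j _
  have e1 : Fin.cons (v 0) (Fin.tail v) = v := Fin.cons_self_tail v
  have e2 : Phi' m v j.succ = v j.castSucc := by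
    unfold Phi'
    rw [← Fin.coeSucc_eq_succ, add_assoc, one_add_last, add_zero]
  have e3 : Phi' m v (j.succ + 1) = v j.succ := by
    unfold Phi'
    rw [add_assoc, one_add_last, add_zero]
  rw [e1, e2, e3, Fin.cons_succ]

lemma close_to_cycW' (m : ℕ) (k : Fin n) (d : Fin m → Fin n) (p1 : G) (gv : Fin m → G) :
    A (pathEnd m k d) k p1 * pathProd A m k d gv
      = cycW A m (Phi' m (Fin.cons k d)) (Fin.cons p1 gv) := by
  have h := close_to_cycW A m (Fin.cons k d) p1 gv
  rw [Fin.cons_zero, Fin.tail_cons] at h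
  exact h

lemma pathEnd_succ (m : ℕ) (k : Fin n) (D : Fin (m+1) → Fin n) :
    pathEnd (m+1) k D = D (Fin.last m) := by
  unfold pathEnd
  rw [← Fin.succ_last, Fin.cons_succ]

end reindex

section expandE
variable {n : ℕ} (A : Fin n → Fin n → (G → ℤ))
variable (ξ : G → ℝ) (ξΓ : ConjClasses G → ℝ)

/-- Expansion of the trace of a power over closed walks. -/
lemma trace_expand (hξ : ∀ a b : G, ξ (a * b) = ξ a + ξ b)
    (hξΓ : ∀ g : G, ξΓ (ConjClasses.mk g) = ξ g)
    {S : ℝ} (hS0 : 0 ≤ S) (hS : ∀ i j g, A i j g ≠ 0 → ξ g ≤ S)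
    (γ : ConjClasses G) (m : ℕ) (Λ : Finset G)
    (hΛ : ∀ y : G, (∃ a b, A a b y ≠ 0) → ξΓ γ - ((m+1 : ℕ) : ℝ) * S ≤ ξ y → y ∈ Λ)
    (Pg : Finset G)
    (hPg : ∀ gv ∈ Fintype.piFinset (fun _ : Fin (m+1) => Λ), (List.ofFn gv).prod ∈ Pg) :
    epsC (∑ i, matPow A (m+1) i i) γ
      = ∑ c : Fin (m+1) → Fin n, ∑ g ∈ Fintype.piFinset (fun _ : Fin (m+1) => Λ),
          if ConjClasses.mk (List.ofFn g).prod = γ then cycW A m c g else 0 := by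
  classical
  have happ : ∀ g : G, (∑ i, matPow A (m+1) i i) g = ∑ i, matPow A (m+1) i i g :=
    fun g => Finset.sum_apply g Finset.univ _
  -- step 1 : support
  have hsupp : Function.support
      (fun g => if ConjClasses.mk g = γ then (∑ i, matPow A (m+1) i i) g else 0) ⊆ ↑Pg := by
    intro g hg
    rw [Function.mem_support] at hg
    by_cases hmk : ConjClasses.mk g = γ
    swap
    · rw [if_neg hmk] at hg; exact absurd rfl hg
    rw [if_pos hmk, happ] at hg
    obtain ⟨i, _, hi⟩ := Finset.exists_ne_zero_of_sum_ne_zero hg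
    obtain ⟨d, gv, hprod, hend, hedge⟩ := exists_path A (m+1) i i g hi
    have hxig : ξΓ γ = ξ g := by rw [← hmk, hξΓ]
    have hsum : ∑ t, ξ (gv t) = ξ g := by
      rw [← NovAux.xi_ofFn_prod ξ hξ (m+1) gv, hprod]
    have hgv : gv ∈ Fintype.piFinset (fun _ : Fin (m+1) => Λ) := by
      rw [Fintype.mem_piFinset]
      intro j
      apply hΛ _ ⟨_, _, hedge j⟩
      have h1 : ∑ t ∈ Finset.univ.erase j, ξ (gv t) ≤ (m : ℝ) * S := by
        have := Finset.sum_le_card_nsmul (Finset.univ.erase j) (fun t => ξ (gv t)) S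
          (fun t _ => hS _ _ _ (hedge t))
        rw [Finset.card_erase_of_mem (Finset.mem_univ _), Finset.card_univ,
          Fintype.card_fin, nsmul_eq_mul] at this
        simpa using this
      have h2 : ξ (gv j) + ∑ t ∈ Finset.univ.erase j, ξ (gv t) = ξ g := by
        rw [← hsum, Finset.add_sum_erase _ (fun t => ξ (gv t)) (Finset.mem_univ j)]
      push_cast
      linarith
    have := hPg gv hgv
    rwa [hprod] at this
  rw [show epsC (∑ i, matPow A (m+1) i i) γ
      = ∑ᶠ g : G, if ConjClasses.mk g = γ then (∑ i, matPow A (m+1) i i) g else 0 from rfl,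
    finsum_eq_sum_of_support_subset _ hsupp]
  -- step 2 : expand the powers
  have hrw : ∀ g ∈ Pg, (if ConjClasses.mk g = γ then (∑ i, matPow A (m+1) i i) g else 0)
      = if ConjClasses.mk g = γ then
          (∑ i : Fin n, ∑ d : Fin (m+1) → Fin n,
            ∑ gv ∈ Fintype.piFinset (fun _ : Fin (m+1) => Λ),
            if (List.ofFn gv).prod = g ∧ pathEnd (m+1) i d = i
            then pathProd A (m+1) i d gv else 0) else 0 := by
    intro g _
    by_cases hmk : ConjClasses.mk g = γ
    swap
    · rw [if_neg hmk, if_neg hmk]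
    rw [if_pos hmk, if_pos hmk, happ]
    apply Finset.sum_congr rfl
    intro i _
    apply pow_eq_pathsum A ξ hξ hS0 hS (m+1) i i g Λ
    intro y hy hy2
    apply hΛ y hy
    have hxig : ξΓ γ = ξ g := by rw [← hmk, hξΓ]
    linarith
  rw [Finset.sum_congr rfl hrw]
  -- step 3 : push the condition inside and move the g-sum innermost
  simp_rw [ite_sum]
  trans (∑ i : Fin n, ∑ d : Fin (m+1) → Fin n,
      ∑ gv ∈ Fintype.piFinset (fun _ : Fin (m+1) => Λ), ∑ g ∈ Pg,
      if ConjClasses.mk g = γ then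
        if (List.ofFn gv).prod = g ∧ pathEnd (m+1) i d = i
        then pathProd A (m+1) i d gv else 0 else 0)
  · rw [Finset.sum_comm]
    apply Finset.sum_congr rfl
    intro i _
    rw [Finset.sum_comm]
    apply Finset.sum_congr rfl
    intro d _
    rw [Finset.sum_comm]
  trans (∑ i : Fin n, ∑ d : Fin (m+1) → Fin n,
      ∑ gv ∈ Fintype.piFinset (fun _ : Fin (m+1) => Λ),
      if ConjClasses.mk (List.ofFn gv).prod = γ then
        (if d (Fin.last m) = i then pathProd A (m+1) i d gv else 0) else 0)
  · apply Finset.sum_congr rfl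
    intro i _
    apply Finset.sum_congr rfl
    intro d _
    apply Finset.sum_congr rfl
    intro gv hgv
    simp_rw [pathEnd_succ]
    rw [Finset.sum_eq_single ((List.ofFn gv).prod)]
    · simp
    · intro b _ hb
      split_ifs with h1 h2
      · exact absurd h2.1 (Ne.symm hb)
      · rfl
      · rfl
    · intro hnot
      exact absurd (hPg gv hgv) hnot
  trans (∑ d : Fin (m+1) → Fin n,
      ∑ gv ∈ Fintype.piFinset (fun _ : Fin (m+1) => Λ),
      if ConjClasses.mk (List.ofFn gv).prod = γ
      then pathProd A (m+1) (d (Fin.last m)) d gv else 0)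
  · rw [Finset.sum_comm]
    apply Finset.sum_congr rfl
    intro d _
    rw [Finset.sum_comm]
    apply Finset.sum_congr rfl
    intro gv _
    rw [← ite_sum, Finset.sum_ite_eq Finset.univ (d (Fin.last m))
      (fun i => pathProd A (m+1) i d gv), if_pos (Finset.mem_univ _)]
  trans (∑ d : Fin (m+1) → Fin n,
      ∑ gv ∈ Fintype.piFinset (fun _ : Fin (m+1) => Λ),
      if ConjClasses.mk (List.ofFn gv).prod = γ
      then cycW A m (Phi m d) gv else 0)
  · apply Finset.sum_congr rfl
    intro d _
    apply Finset.sum_congr rfl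
    intro gv _
    rw [pathProd_to_cycW]
  exact Fintype.sum_bijective (Phi m) (Phi_bijective m) _ _ (fun d => rfl)

/-- Expansion of the L-side pairing over closed walks. -/
lemma lhs_expand (hξ : ∀ a b : G, ξ (a * b) = ξ a + ξ b)
    (hξΓ : ∀ g : G, ξΓ (ConjClasses.mk g) = ξ g)
    {S : ℝ} (hS0 : 0 ≤ S) (hS : ∀ i j g, A i j g ≠ 0 → ξ g ≤ S)
    (γ : ConjClasses G) (m : ℕ) (Λ : Finset G) (Pg : Finset G)
    (hΛ1 : ∀ y : G, (∃ a b, A a b y ≠ 0) → ξΓ γ - S - (m : ℝ) * S ≤ ξ y → y ∈ Λ)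
    (hPg : ∀ gv ∈ Fintype.piFinset (fun _ : Fin m => Λ), (List.ofFn gv).prod ∈ Pg) :
    (∑ i : Fin n, ∑ k : Fin n, ∑ p1 ∈ Λ, ∑ p2 ∈ Pg,
      if ConjClasses.mk (p1 * p2) = γ then
        ξ p1 * ((A i k p1 : ℤ) : ℝ) * ((matPow A m k i p2 : ℤ) : ℝ) else 0)
    = ∑ c : Fin (m+1) → Fin n, ∑ g ∈ Fintype.piFinset (fun _ : Fin (m+1) => Λ),
        if ConjClasses.mk (List.ofFn g).prod = γ
        then ξ (g 0) * ((cycW A m c g : ℤ) : ℝ) else 0 := by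
  classical
  -- Step 1 : expand the power entries as path sums
  have step1 : ∀ (i k : Fin n), ∀ p1 ∈ Λ, ∀ p2 ∈ Pg,
      (if ConjClasses.mk (p1 * p2) = γ then
        ξ p1 * ((A i k p1 : ℤ) : ℝ) * ((matPow A m k i p2 : ℤ) : ℝ) else 0)
      = if ConjClasses.mk (p1 * p2) = γ then
          (∑ d : Fin m → Fin n, ∑ gv ∈ Fintype.piFinset (fun _ : Fin m => Λ),
            if (List.ofFn gv).prod = p2 ∧ pathEnd m k d = i
            then ξ p1 * ((A i k p1 : ℤ) : ℝ) * ((pathProd A m k d gv : ℤ) : ℝ) else 0)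
          else 0 := by
    intro i k p1 _ p2 _
    by_cases hC : ConjClasses.mk (p1 * p2) = γ
    swap
    · rw [if_neg hC, if_neg hC]
    rw [if_pos hC, if_pos hC]
    by_cases hz : A i k p1 = 0
    · simp [hz]
    · have hsum2 : ξ p1 + ξ p2 = ξΓ γ := by
        have h := hξΓ (p1 * p2)
        rw [hC, hξ] at h
        linarith
      rw [pow_eq_pathsum A ξ hξ hS0 hS m k i p2 Λ ?_]
      · rw [Int.cast_sum, Finset.mul_sum]
        apply Finset.sum_congr rfl
        intro d _
        rw [Int.cast_sum, Finset.mul_sum]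
        apply Finset.sum_congr rfl
        intro gv _
        rw [apply_ite (fun z : ℤ => (z : ℝ)), Int.cast_zero, mul_ite, mul_zero]
      · intro y hy hy2
        have b1 : ξ p1 ≤ S := hS i k p1 hz
        apply hΛ1 y hy
        linarith
  rw [Finset.sum_congr rfl (fun i _ => Finset.sum_congr rfl (fun k _ =>
    Finset.sum_congr rfl (fun p1 hp1 => Finset.sum_congr rfl (fun p2 hp2 =>
      step1 i k p1 hp1 p2 hp2))))]
  simp_rw [ite_sum]
  -- Step 2 : move the i-sum innermost and collapse it
  trans (∑ k : Fin n, ∑ p1 ∈ Λ, ∑ p2 ∈ Pg, ∑ d : Fin m → Fin n,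
      ∑ gv ∈ Fintype.piFinset (fun _ : Fin m => Λ), ∑ i : Fin n,
      if ConjClasses.mk (p1 * p2) = γ then
        (if (List.ofFn gv).prod = p2 ∧ pathEnd m k d = i
         then ξ p1 * ((A i k p1 : ℤ) : ℝ) * ((pathProd A m k d gv : ℤ) : ℝ) else 0) else 0)
  · rw [Finset.sum_comm]
    apply Finset.sum_congr rfl
    intro k _
    rw [Finset.sum_comm]
    apply Finset.sum_congr rfl
    intro p1 _
    rw [Finset.sum_comm]
    apply Finset.sum_congr rfl
    intro p2 _
    rw [Finset.sum_comm]
    apply Finset.sum_congr rfl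
    intro d _
    rw [Finset.sum_comm]
  trans (∑ k : Fin n, ∑ p1 ∈ Λ, ∑ p2 ∈ Pg, ∑ d : Fin m → Fin n,
      ∑ gv ∈ Fintype.piFinset (fun _ : Fin m => Λ),
      if ConjClasses.mk (p1 * p2) = γ then
        (if (List.ofFn gv).prod = p2
         then ξ p1 * ((A (pathEnd m k d) k p1 : ℤ) : ℝ) * ((pathProd A m k d gv : ℤ) : ℝ)
         else 0) else 0)
  · apply Finset.sum_congr rfl; intro k _
    apply Finset.sum_congr rfl; intro p1 _
    apply Finset.sum_congr rfl; intro p2 _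
    apply Finset.sum_congr rfl; intro d _
    apply Finset.sum_congr rfl; intro gv _
    simp_rw [ite_and]
    rw [← ite_sum, ← ite_sum]
    by_cases hC : ConjClasses.mk (p1 * p2) = γ
    swap
    · rw [if_neg hC, if_neg hC]
    rw [if_pos hC, if_pos hC]
    by_cases hp : (List.ofFn gv).prod = p2
    swap
    · rw [if_neg hp, if_neg hp]
    rw [if_pos hp, if_pos hp]
    rw [Finset.sum_ite_eq Finset.univ (pathEnd m k d)
      (fun i => ξ p1 * ((A i k p1 : ℤ) : ℝ) * ((pathProd A m k d gv : ℤ) : ℝ)),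
      if_pos (Finset.mem_univ _)]
  -- Step 3 : collapse the p2-sum
  trans (∑ k : Fin n, ∑ p1 ∈ Λ, ∑ d : Fin m → Fin n,
      ∑ gv ∈ Fintype.piFinset (fun _ : Fin m => Λ),
      if ConjClasses.mk (p1 * (List.ofFn gv).prod) = γ then
        ξ p1 * ((A (pathEnd m k d) k p1 : ℤ) : ℝ) * ((pathProd A m k d gv : ℤ) : ℝ)
      else 0)
  · apply Finset.sum_congr rfl; intro k _
    apply Finset.sum_congr rfl; intro p1 _
    rw [Finset.sum_comm]
    apply Finset.sum_congr rfl; intro d _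
    rw [Finset.sum_comm]
    apply Finset.sum_congr rfl; intro gv hgv
    rw [Finset.sum_eq_single ((List.ofFn gv).prod)]
    · simp
    · intro b _ hb
      split_ifs with h1 h2
      · exact absurd h2 (Ne.symm hb)
      · rfl
      · rfl
    · intro hnot
      exact absurd (hPg gv hgv) hnot
  -- Step 4 : rewrite as cyclic walks
  trans (∑ k : Fin n, ∑ d : Fin m → Fin n, ∑ p1 ∈ Λ,
      ∑ gv ∈ Fintype.piFinset (fun _ : Fin m => Λ),
      if ConjClasses.mk (p1 * (List.ofFn gv).prod) = γ then
        ξ p1 * ((cycW A m (Phi' m (Fin.cons k d)) (Fin.cons p1 gv) : ℤ) : ℝ)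
      else 0)
  · apply Finset.sum_congr rfl; intro k _
    rw [Finset.sum_comm]
    apply Finset.sum_congr rfl; intro d _
    apply Finset.sum_congr rfl; intro p1 _
    apply Finset.sum_congr rfl; intro gv _
    rw [mul_assoc, ← Int.cast_mul, close_to_cycW' A m k d p1 gv]
  -- Step 5 : reassemble the right-hand side
  symm
  trans (∑ v : Fin (m+1) → Fin n, ∑ g ∈ Fintype.piFinset (fun _ : Fin (m+1) => Λ),
      if ConjClasses.mk (List.ofFn g).prod = γ
      then ξ (g 0) * ((cycW A m (Phi' m v) g : ℤ) : ℝ) else 0)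
  · exact (Fintype.sum_bijective (Phi' m) (Phi'_bijective m) _ _ (fun v => rfl)).symm
  rw [← Fintype.piFinset_univ (α := Fin (m+1)) (β := fun _ => Fin n)]
  rw [sum_piFinset_cons m (Finset.univ : Finset (Fin n))]
  apply Finset.sum_congr rfl; intro k _
  rw [Fintype.piFinset_univ]
  apply Finset.sum_congr rfl; intro d _
  rw [sum_piFinset_cons m Λ]
  apply Finset.sum_congr rfl; intro p1 _
  apply Finset.sum_congr rfl; intro gv _
  rw [ofFn_cons_prod]
  have : (Fin.cons p1 gv : Fin (m+1) → G) 0 = p1 := Fin.cons_zero _ _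
  rw [this]

end expandE
end NovAux

open NovAux

/-- For a `ξ`-regular matrix `A`, the homomorphism `L = μ ∘ DT` applied to the
torsion class of `I - A` (whose Dennis trace is represented by
`trace ((I-A) ⊗ (I-A)⁻¹)` with `(I-A)⁻¹ = ∑ₘ Aᵐ`) satisfies
`L(τ(I-A)) = -ε(∑_{m≥1} trace(Aᵐ)/m)`; in particular its values are rational,
so `L` restricts to a homomorphism `𝔏 : W̄ → Q̂Γ_ξ`. -/
theorem L_of_torsion_eq_neg_eps_log
    {G : Type*} [Group G] (ξ : G → ℝ)
    (hξ : ∀ a b : G, ξ (a * b) = ξ a + ξ b)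
    (ξΓ : ConjClasses G → ℝ) (hξΓ : ∀ g : G, ξΓ (ConjClasses.mk g) = ξ g)
    {n : ℕ} (A : Fin n → Fin n → (G → ℤ))
    (hA : ∀ i j, NovCond ξ (A i j)) (hreg : XiRegular ξ A) :
    (∀ γ : ConjClasses G,
      (∑ i : Fin n, ∑ k : Fin n,
        mMap ξ ξΓ (((matId - A : Fin n → Fin n → (G → ℤ))) i k) (fun g => ∑ᶠ m : ℕ, matPow A m k i g) γ) =
      -(∑ᶠ m : ℕ, if 1 ≤ m then
          ((epsC (∑ i : Fin n, matPow A m i i) γ : ℤ) : ℝ) / m else 0)) ∧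
    (∀ γ : ConjClasses G, ∃ q : ℚ,
      (∑ i : Fin n, ∑ k : Fin n,
        mMap ξ ξΓ (((matId - A : Fin n → Fin n → (G → ℤ))) i k) (fun g => ∑ᶠ m : ℕ, matPow A m k i g) γ)
        = (q : ℝ)) := by
    classical
  obtain ⟨K, hK, hreg2⟩ := hreg
  obtain ⟨S, hS0, hS⟩ : ∃ S : ℝ, 0 ≤ S ∧ ∀ i j g, A i j g ≠ 0 → ξ g ≤ S := by
    choose s hs using fun p : Fin n × Fin n => NovAux.nov_bound (hA p.1 p.2)
    refine ⟨(insert (0:ℝ) (Finset.image s (Finset.univ : Finset (Fin n × Fin n)))).max'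
      ⟨0, Finset.mem_insert_self _ _⟩, ?_, ?_⟩
    · exact Finset.le_max' _ _ (Finset.mem_insert_self _ _)
    · intro i j g hg
      refine le_trans ((hs (i, j)).2 g hg) ?_
      exact Finset.le_max' _ _ (Finset.mem_insert_of_mem
        (Finset.mem_image_of_mem s (Finset.mem_univ (i, j))))
  have main : ∀ γ : ConjClasses G,
      ((∑ i : Fin n, ∑ k : Fin n,
        mMap ξ ξΓ (((matId - A : Fin n → Fin n → (G → ℤ))) i k)
          (fun g => ∑ᶠ m : ℕ, matPow A m k i g) γ) =
        -(∑ᶠ m : ℕ, if 1 ≤ m then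
          ((epsC (∑ i : Fin n, matPow A m i i) γ : ℤ) : ℝ) / m else 0)) ∧
      (∃ q : ℚ, (∑ i : Fin n, ∑ k : Fin n,
        mMap ξ ξΓ (((matId - A : Fin n → Fin n → (G → ℤ))) i k)
          (fun g => ∑ᶠ m : ℕ, matPow A m k i g) γ) = (q : ℝ)) := by
    intro γ
    by_cases hc : ξΓ γ < 0
    · -- main case
      have hcne : ξΓ γ ≠ 0 := ne_of_lt hc
      set N : ℕ := max 1 ⌈ξΓ γ / K⌉₊ with hNdef
      have hN1 : 1 ≤ N := le_max_left _ _
      have hN : ∀ mm : ℕ, ξΓ γ ≤ K * ((mm : ℝ) + 1) → mm + 1 ≤ N := by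
        intro mm hmm
        have hdiv : ((mm:ℝ) + 1) ≤ ξΓ γ / K := by
          rw [le_div_iff_of_neg hK]
          rw [mul_comm]
          exact hmm
        have h3 : ((mm + 1 : ℕ) : ℝ) ≤ ξΓ γ / K := by push_cast; linarith
        have h2 : mm + 1 ≤ ⌈ξΓ γ / K⌉₊ := by
          calc mm + 1 = ⌈((mm + 1 : ℕ) : ℝ)⌉₊ := (Nat.ceil_natCast _).symm
            _ ≤ ⌈ξΓ γ / K⌉₊ := Nat.ceil_mono h3
        exact le_trans h2 (le_max_right _ _)
      have hfin : {y : G | (∃ a b, A a b y ≠ 0) ∧ ξΓ γ - (N:ℝ) * S ≤ ξ y}.Finite := by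
        apply Set.Finite.subset (Set.finite_iUnion (fun a : Fin n =>
          Set.finite_iUnion (fun b : Fin n => hA a b (ξΓ γ - (N:ℝ)*S))))
        rintro y ⟨⟨a, b, hy⟩, hr⟩
        exact Set.mem_iUnion.2 ⟨a, Set.mem_iUnion.2 ⟨b, ⟨hy, hr⟩⟩⟩
      set Λ : Finset G := hfin.toFinset with hΛdef
      have hΛmem : ∀ y : G, (∃ a b, A a b y ≠ 0) → ξΓ γ - (N:ℝ) * S ≤ ξ y → y ∈ Λ := by
        intro y h1 h2
        rw [hΛdef, Set.Finite.mem_toFinset]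
        exact ⟨h1, h2⟩
      set Pg : Finset G := (Finset.range (N+1)).biUnion (fun mm =>
        Finset.image (fun gv => (List.ofFn gv).prod)
          (Fintype.piFinset (fun _ : Fin mm => Λ))) with hPgdef
      have hPgm : ∀ mm : ℕ, mm ≤ N → ∀ gv ∈ Fintype.piFinset (fun _ : Fin mm => Λ),
          (List.ofFn gv).prod ∈ Pg := by
        intro mm hmm gv hgv
        rw [hPgdef]
        exact Finset.mem_biUnion.2 ⟨mm, Finset.mem_range.2 (Nat.lt_succ_of_le hmm),
          Finset.mem_image_of_mem _ hgv⟩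
      have hlab : ∀ (mm : ℕ) (k i : Fin n) (x : G), mm ≤ N → matPow A mm k i x ≠ 0 →
          ξΓ γ - S ≤ ξ x → x ∈ Pg := by
        intro mm k i x hmm hpow hx
        obtain ⟨d, gv, hprod, hend, hedge⟩ := exists_path A mm k i x hpow
        have hsum : ∑ t, ξ (gv t) = ξ x := by
          rw [← NovAux.xi_ofFn_prod ξ hξ mm gv, hprod]
        have hgv : gv ∈ Fintype.piFinset (fun _ : Fin mm => Λ) := by
          rw [Fintype.mem_piFinset]
          intro j
          apply hΛmem _ ⟨_, _, hedge j⟩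
          have h1 : ∑ t ∈ Finset.univ.erase j, ξ (gv t) ≤ ((mm - 1 : ℕ) : ℝ) * S := by
            have h0 := Finset.sum_le_card_nsmul (Finset.univ.erase j)
              (fun t => ξ (gv t)) S (fun t _ => hS _ _ _ (hedge t))
            rwa [Finset.card_erase_of_mem (Finset.mem_univ _), Finset.card_univ,
              Fintype.card_fin, nsmul_eq_mul] at h0
          have h2 : ξ (gv j) + ∑ t ∈ Finset.univ.erase j, ξ (gv t) = ξ x := by
            rw [← hsum, Finset.add_sum_erase _ (fun t => ξ (gv t)) (Finset.mem_univ j)]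
          have h3 : ((mm - 1 : ℕ) : ℝ) ≤ (N : ℝ) - 1 := by
            have hsub : mm - 1 ≤ N - 1 := Nat.sub_le_sub_right hmm 1
            calc ((mm-1:ℕ):ℝ) ≤ ((N-1:ℕ):ℝ) := Nat.cast_le.2 hsub
              _ = (N:ℝ) - 1 := by rw [Nat.cast_sub hN1]; norm_num
          have h4 : ((mm - 1 : ℕ) : ℝ) * S ≤ ((N:ℝ) - 1) * S :=
            mul_le_mul_of_nonneg_right h3 hS0
          linarith
        have := hPgm mm hmm gv hgv
        rwa [hprod] at this
      -- conversion of the right-hand side finsum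
      have hRHS : (∑ᶠ m : ℕ, if 1 ≤ m then
            ((epsC (∑ i : Fin n, matPow A m i i) γ : ℤ) : ℝ) / m else 0)
          = ∑ mm ∈ Finset.range N,
            ((epsC (∑ i : Fin n, matPow A (mm+1) i i) γ : ℤ) : ℝ) / ((mm : ℝ) + 1) := by
        rw [finsum_eq_sum_of_support_subset _ (s := Finset.range (N+1)) ?_]
        · rw [Finset.sum_range_succ']
          have h0 : (if 1 ≤ 0 then ((epsC (∑ i : Fin n, matPow A 0 i i) γ : ℤ) : ℝ) / (0:ℕ) else 0) = 0 := by
            norm_num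
          rw [h0, add_zero]
          apply Finset.sum_congr rfl
          intro mm _
          rw [if_pos (Nat.succ_le_succ (Nat.zero_le mm))]
          push_cast
          ring
        · intro mm hmm
          rw [Function.mem_support] at hmm
          by_cases h1 : 1 ≤ mm
          swap
          · rw [if_neg h1] at hmm; exact absurd rfl hmm
          rw [if_pos h1] at hmm
          have hEne : epsC (∑ i : Fin n, matPow A mm i i) γ ≠ 0 := by
            intro h0
            rw [h0] at hmm
            simp at hmm
          have hex : ∃ g : G, (if ConjClasses.mk g = γ then (∑ i : Fin n, matPow A mm i i) g else 0) ≠ 0 := by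
            by_contra hno
            push_neg at hno
            exact hEne (finsum_eq_zero_of_forall_eq_zero hno)
          obtain ⟨g, hg⟩ := hex
          by_cases hmk : ConjClasses.mk g = γ
          swap
          · rw [if_neg hmk] at hg; exact absurd rfl hg
          rw [if_pos hmk, Finset.sum_apply] at hg
          obtain ⟨i, _, hi⟩ := Finset.exists_ne_zero_of_sum_ne_zero hg
          obtain ⟨m', rfl⟩ : ∃ m', mm = m' + 1 :=
            ⟨mm - 1, (Nat.succ_pred_eq_of_pos h1).symm⟩
          have hb := trace_bound ξ A hξ hA hreg2 m' i g hi
          have hxig : ξ g = ξΓ γ := by rw [← hmk, hξΓ]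
          have hle := hN m' (by rw [← hxig]; push_cast at hb ⊢; linarith)
          exact Finset.mem_coe.2 (Finset.mem_range.2 (Nat.lt_succ_of_le hle))
      -- conversion of each mMap value
      have hMM : ∀ i k : Fin n,
          mMap ξ ξΓ (((matId - A : Fin n → Fin n → (G → ℤ))) i k)
            (fun g => ∑ᶠ m : ℕ, matPow A m k i g) γ
          = ∑ p ∈ Λ ×ˢ Pg, if ConjClasses.mk (p.1 * p.2) = γ then
              (ξ p.1 / ξΓ γ) * (((- A i k p.1)
                * (∑ mm ∈ Finset.range N, matPow A mm k i p.2) : ℤ) : ℝ) else 0 := by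
        intro i k
        unfold mMap
        rw [if_pos hc]
        have hmatid : ∀ x : G, x ≠ 1 →
            (matId - A : Fin n → Fin n → (G → ℤ)) i k x = - A i k x := by
          intro x hx
          have h1 : (matId - A : Fin n → Fin n → (G → ℤ)) i k x = matId i k x - A i k x := rfl
          have h2 : matId i k x = 0 := by
            unfold matId oneF
            by_cases h : i = k <;> simp [h, hx]
          rw [h1, h2, zero_sub]
        rw [finsum_eq_sum_of_support_subset _ (s := Λ ×ˢ Pg) ?_]
        · apply Finset.sum_congr rfl
          intro p _
          by_cases hmk : ConjClasses.mk (p.1 * p.2) = γ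
          swap
          · rw [if_neg hmk, if_neg hmk]
          rw [if_pos hmk, if_pos hmk]
          by_cases hx1 : ξ p.1 = 0
          · rw [hx1, zero_div, zero_mul, zero_mul]
          have hp1 : p.1 ≠ 1 := by
            intro h
            exact hx1 (by rw [h]; exact NovAux.xi_one ξ hξ)
          congr 1
          rw [hmatid p.1 hp1]
          by_cases hz : A i k p.1 = 0
          · rw [hz]; simp
          congr 2
          apply finsum_eq_sum_of_support_subset
          intro mm hmm
          rw [Function.mem_support] at hmm
          have hcb := close_bound ξ A hξ hA hreg2 mm k i p.2 p.1 hmm hz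
          have hsum2 : ξ p.1 + ξ p.2 = ξΓ γ := by
            have h := hξΓ (p.1 * p.2)
            rw [hmk, hξ] at h
            linarith
          have hle := hN mm (by push_cast at hcb ⊢; linarith)
          exact Finset.mem_coe.2 (Finset.mem_range.2 (Nat.lt_of_succ_le hle))
        · intro p hp
          rw [Function.mem_support] at hp
          by_cases hmk : ConjClasses.mk (p.1 * p.2) = γ
          swap
          · rw [if_neg hmk] at hp; exact absurd rfl hp
          rw [if_pos hmk] at hp
          have hx1 : ξ p.1 ≠ 0 := by
            intro h
            rw [h, zero_div, zero_mul] at hp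
            exact hp rfl
          have hmul : ((matId - A : Fin n → Fin n → (G → ℤ)) i k p.1)
              * (∑ᶠ m : ℕ, matPow A m k i p.2) ≠ 0 := by
            intro h
            rw [h] at hp
            simp at hp
          obtain ⟨hl1, hl2⟩ := mul_ne_zero_iff.1 hmul
          have hp1 : p.1 ≠ 1 := by
            intro h
            exact hx1 (by rw [h]; exact NovAux.xi_one ξ hξ)
          have hz : A i k p.1 ≠ 0 := by
            intro h
            rw [hmatid p.1 hp1, h, neg_zero] at hl1
            exact hl1 rfl
          have hex : ∃ mm, matPow A mm k i p.2 ≠ 0 := by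
            by_contra hno
            push_neg at hno
            exact hl2 (finsum_eq_zero_of_forall_eq_zero hno)
          obtain ⟨mm, hpow⟩ := hex
          have hsum2 : ξ p.1 + ξ p.2 = ξΓ γ := by
            have h := hξΓ (p.1 * p.2)
            rw [hmk, hξ] at h
            linarith
          have hcb := close_bound ξ A hξ hA hreg2 mm k i p.2 p.1 hpow hz
          have hmmN : mm + 1 ≤ N := hN mm (by push_cast at hcb ⊢; linarith)
          have hmmN' : mm ≤ N := le_trans (Nat.le_succ mm) hmmN
          rw [Finset.mem_coe, Finset.mem_product]
          constructor
          · apply hΛmem _ ⟨i, k, hz⟩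
            have hb2 : ξ p.2 ≤ (mm:ℝ) * S := pow_xi_bound ξ A hξ hS mm k i _ hpow
            have hcast : (mm:ℝ) ≤ (N:ℝ) := Nat.cast_le.2 hmmN'
            nlinarith
          · apply hlab mm k i p.2 hmmN' hpow
            have := hS i k p.1 hz
            linarith
      -- algebraic reorganisation of each mMap value
      have hstep : ∀ i k : Fin n,
          (∑ p ∈ Λ ×ˢ Pg, if ConjClasses.mk (p.1 * p.2) = γ then
            (ξ p.1 / ξΓ γ) * (((- A i k p.1)
              * (∑ mm ∈ Finset.range N, matPow A mm k i p.2) : ℤ) : ℝ) else 0)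
          = ∑ mm ∈ Finset.range N, ∑ p1 ∈ Λ, ∑ p2 ∈ Pg,
            (if ConjClasses.mk (p1 * p2) = γ then
              (-(1/ξΓ γ)) * (ξ p1 * ((A i k p1 : ℤ) : ℝ)
                * ((matPow A mm k i p2 : ℤ) : ℝ)) else 0) := by
        intro i k
        rw [Finset.sum_product]
        trans (∑ p1 ∈ Λ, ∑ p2 ∈ Pg, ∑ mm ∈ Finset.range N,
          (if ConjClasses.mk (p1 * p2) = γ then
            (-(1/ξΓ γ)) * (ξ p1 * ((A i k p1 : ℤ) : ℝ)
              * ((matPow A mm k i p2 : ℤ) : ℝ)) else 0))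
        · apply Finset.sum_congr rfl
          intro p1 _
          apply Finset.sum_congr rfl
          intro p2 _
          by_cases hmk : ConjClasses.mk (p1 * p2) = γ
          swap
          · rw [if_neg hmk]
            symm
            apply Finset.sum_eq_zero
            intro mm _
            rw [if_neg hmk]
          rw [if_pos hmk]
          rw [Finset.sum_congr rfl (fun mm _ => if_pos hmk)]
          push_cast
          rw [Finset.mul_sum]
          rw [Finset.mul_sum]
          apply Finset.sum_congr rfl
          intro mm _
          ring
        · trans (∑ p1 ∈ Λ, ∑ mm ∈ Finset.range N, ∑ p2 ∈ Pg,
            (if ConjClasses.mk (p1 * p2) = γ then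
              (-(1/ξΓ γ)) * (ξ p1 * ((A i k p1 : ℤ) : ℝ)
                * ((matPow A mm k i p2 : ℤ) : ℝ)) else 0))
          · apply Finset.sum_congr rfl
            intro p1 _
            rw [Finset.sum_comm]
          · rw [Finset.sum_comm]
      -- the heart : per-length core identity
      have hcore : ∀ mm ∈ Finset.range N,
          (∑ i : Fin n, ∑ k : Fin n, ∑ p1 ∈ Λ, ∑ p2 ∈ Pg,
            if ConjClasses.mk (p1 * p2) = γ then
              ξ p1 * ((A i k p1 : ℤ) : ℝ) * ((matPow A mm k i p2 : ℤ) : ℝ) else 0)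
          = ξΓ γ * ((epsC (∑ i : Fin n, matPow A (mm+1) i i) γ : ℤ) : ℝ) / ((mm:ℝ)+1) := by
        intro mm hmm
        have hmmN : mm + 1 ≤ N := Nat.succ_le_of_lt (Finset.mem_range.1 hmm)
        have hmmN' : mm ≤ N := le_trans (Nat.le_succ mm) hmmN
        have hcastN : ((mm:ℝ) + 1) ≤ (N:ℝ) := by
          have h := (Nat.cast_le (α := ℝ)).2 hmmN
          push_cast at h
          linarith
        have hYX := lhs_expand A ξ ξΓ hξ hξΓ hS0 hS γ mm Λ Pg ?_ (hPgm mm hmmN')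
        swap
        · intro y hy hy2
          apply hΛmem y hy
          nlinarith
        have hTE := trace_expand A ξ ξΓ hξ hξΓ hS0 hS γ mm Λ ?_ Pg (hPgm (mm+1) hmmN)
        swap
        · intro y hy hy2
          apply hΛmem y hy
          push_cast at hy2
          nlinarith
        have hT : ((epsC (∑ i : Fin n, matPow A (mm+1) i i) γ : ℤ) : ℝ)
            = ∑ c : Fin (mm+1) → Fin n, ∑ g ∈ Fintype.piFinset (fun _ : Fin (mm+1) => Λ),
              if ConjClasses.mk (List.ofFn g).prod = γ then ((cycW A mm c g : ℤ) : ℝ) else 0 := by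
          rw [hTE, Int.cast_sum]
          apply Finset.sum_congr rfl
          intro c _
          rw [Int.cast_sum]
          apply Finset.sum_congr rfl
          intro g _
          rw [apply_ite (fun z : ℤ => (z : ℝ)), Int.cast_zero]
        have hW := walk_rot A ξ hξ ξΓ hξΓ γ mm Λ
        rw [hYX, eq_div_iff (by positivity : ((mm:ℝ)+1) ≠ 0)]
        calc (∑ c : Fin (mm+1) → Fin n, ∑ g ∈ Fintype.piFinset (fun _ : Fin (mm+1) => Λ),
              if ConjClasses.mk (List.ofFn g).prod = γ
              then ξ (g 0) * ((cycW A mm c g : ℤ) : ℝ) else 0) * ((mm:ℝ)+1)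
            = ((mm:ℝ)+1) * (∑ c : Fin (mm+1) → Fin n,
                ∑ g ∈ Fintype.piFinset (fun _ : Fin (mm+1) => Λ),
                if ConjClasses.mk (List.ofFn g).prod = γ
                then ξ (g 0) * ((cycW A mm c g : ℤ) : ℝ) else 0) := mul_comm _ _
          _ = ξΓ γ * ∑ c : Fin (mm+1) → Fin n,
                ∑ g ∈ Fintype.piFinset (fun _ : Fin (mm+1) => Λ),
                if ConjClasses.mk (List.ofFn g).prod = γ
                then ((cycW A mm c g : ℤ) : ℝ) else 0 := hW
          _ = ξΓ γ * ((epsC (∑ i : Fin n, matPow A (mm+1) i i) γ : ℤ) : ℝ) := by rw [hT]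
      -- final assembly
      have hfinal : (∑ i : Fin n, ∑ k : Fin n,
          mMap ξ ξΓ (((matId - A : Fin n → Fin n → (G → ℤ))) i k)
            (fun g => ∑ᶠ m : ℕ, matPow A m k i g) γ)
          = -(∑ mm ∈ Finset.range N,
              ((epsC (∑ i : Fin n, matPow A (mm+1) i i) γ : ℤ) : ℝ) / ((mm:ℝ)+1)) := by
        rw [Finset.sum_congr rfl (fun i _ => Finset.sum_congr rfl
          (fun k _ => (hMM i k).trans (hstep i k)))]
        trans (∑ mm ∈ Finset.range N, ∑ i : Fin n, ∑ k : Fin n, ∑ p1 ∈ Λ, ∑ p2 ∈ Pg,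
          (if ConjClasses.mk (p1 * p2) = γ then
            (-(1/ξΓ γ)) * (ξ p1 * ((A i k p1 : ℤ) : ℝ)
              * ((matPow A mm k i p2 : ℤ) : ℝ)) else 0))
        · trans (∑ i : Fin n, ∑ mm ∈ Finset.range N, ∑ k : Fin n, ∑ p1 ∈ Λ, ∑ p2 ∈ Pg,
            (if ConjClasses.mk (p1 * p2) = γ then
              (-(1/ξΓ γ)) * (ξ p1 * ((A i k p1 : ℤ) : ℝ)
                * ((matPow A mm k i p2 : ℤ) : ℝ)) else 0))
          · apply Finset.sum_congr rfl
            intro i _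
            rw [Finset.sum_comm]
          · rw [Finset.sum_comm]
        rw [← Finset.sum_neg_distrib]
        apply Finset.sum_congr rfl
        intro mm hmm
        have hscal : (∑ i : Fin n, ∑ k : Fin n, ∑ p1 ∈ Λ, ∑ p2 ∈ Pg,
            (if ConjClasses.mk (p1 * p2) = γ then
              (-(1/ξΓ γ)) * (ξ p1 * ((A i k p1 : ℤ) : ℝ)
                * ((matPow A mm k i p2 : ℤ) : ℝ)) else 0))
            = (-(1/ξΓ γ)) * (∑ i : Fin n, ∑ k : Fin n, ∑ p1 ∈ Λ, ∑ p2 ∈ Pg,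
              (if ConjClasses.mk (p1 * p2) = γ then
                ξ p1 * ((A i k p1 : ℤ) : ℝ) * ((matPow A mm k i p2 : ℤ) : ℝ) else 0)) := by
          rw [Finset.mul_sum]
          apply Finset.sum_congr rfl
          intro i _
          rw [Finset.mul_sum]
          apply Finset.sum_congr rfl
          intro k _
          rw [Finset.mul_sum]
          apply Finset.sum_congr rfl
          intro p1 _
          rw [Finset.mul_sum]
          apply Finset.sum_congr rfl
          intro p2 _
          rw [mul_ite, mul_zero]
        rw [hscal, hcore mm hmm]
        field_simp
      refine ⟨?_, ?_⟩
      · rw [hfinal, hRHS]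
      · refine ⟨-(∑ mm ∈ Finset.range N,
          ((epsC (∑ i : Fin n, matPow A (mm+1) i i) γ : ℤ) : ℚ) / ((mm:ℚ)+1)), ?_⟩
        rw [hfinal]
        push_cast
        ring
    · -- easy case : everything vanishes
      have hL0 : (∑ i : Fin n, ∑ k : Fin n,
          mMap ξ ξΓ (((matId - A : Fin n → Fin n → (G → ℤ))) i k)
            (fun g => ∑ᶠ m : ℕ, matPow A m k i g) γ) = 0 := by
        apply Finset.sum_eq_zero
        intro i _
        apply Finset.sum_eq_zero
        intro k _
        unfold mMap
        rw [if_neg hc]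
      have hE0 : ∀ mm : ℕ, 1 ≤ mm → epsC (∑ i : Fin n, matPow A mm i i) γ = 0 := by
        intro mm h1
        obtain ⟨m', rfl⟩ : ∃ m', mm = m' + 1 := ⟨mm - 1, (Nat.succ_pred_eq_of_pos h1).symm⟩
        apply finsum_eq_zero_of_forall_eq_zero
        intro g
        by_cases hmk : ConjClasses.mk g = γ
        swap
        · rw [if_neg hmk]
        rw [if_pos hmk]
        by_contra hne
        rw [Finset.sum_apply] at hne
        obtain ⟨i, _, hi⟩ := Finset.exists_ne_zero_of_sum_ne_zero hne
        have hb := trace_bound ξ A hξ hA hreg2 m' i g hi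
        have hxig : ξ g = ξΓ γ := by rw [← hmk, hξΓ]
        have hneg : K * (m' + 1 : ℝ) < 0 :=
          mul_neg_of_neg_of_pos hK (by positivity)
        have := not_lt.1 hc
        linarith
      have hR0 : (∑ᶠ m : ℕ, if 1 ≤ m then
          ((epsC (∑ i : Fin n, matPow A m i i) γ : ℤ) : ℝ) / m else 0) = 0 := by
        apply finsum_eq_zero_of_forall_eq_zero
        intro mm
        by_cases h1 : 1 ≤ mm
        · rw [if_pos h1, hE0 mm h1]; simp
        · rw [if_neg h1]
      refine ⟨?_, ⟨0, ?_⟩⟩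
      · rw [hL0, hR0, neg_zero]
      · rw [hL0]; simp
  exact ⟨fun γ => (main γ).1, fun γ => (main γ).2⟩
end
end
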